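/- arXiv:2306.11357 — 6 statements merged into one kernel-verified Lean document; each statement's English description precedes it below -/
import Mathlib

section
/- Assume d ∈ ℝ. There exists x ∈ ℝ³ with x₁+x₂+x₃ = d and d < min(2x₁, 2x₂, 2x₃, a+x₁, b+x₂, c+x₃) (i.e. the cell 𝒞(D) ⊆ Sk(a,b,c,d) has nonempty interior in the plane {x₁+x₂+x₃ = d}) if and only if d < min(0, 2a−d) + min(0, 2b−d) + min(0, 2c−d). Similarly, assume a ∈ ℝ; then there exists x ∈ ℝ³ with x₂+x₃ = a and a+x₁ < min(2x₁, 2x₂, 2x₃, b+x₂, c+x₃, d) (i.e. 𝒞(AX₁) has nonempty interior in its plane) if and only if a < min(0, b−a) + min(0, c−a) and 2a < d. -/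
noncomputable section

abbrev R3 : Type := ℝ × ℝ × ℝ

/-- The minimum of the tropical monomials of the Markov cubic, computed in `WithTop ℝ`
(a term equal to `⊤ = ∞` is automatically irrelevant for the minimum). -/
def tmin (a b c d : WithTop ℝ) (x : R3) : WithTop ℝ :=
  min (min (min ((2 * x.1 : ℝ) : WithTop ℝ) ((2 * x.2.1 : ℝ) : WithTop ℝ))
        (min ((2 * x.2.2 : ℝ) : WithTop ℝ) (a + (x.1 : WithTop ℝ))))
    (min (min (b + (x.2.1 : WithTop ℝ)) (c + (x.2.2 : WithTop ℝ))) d)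

/-- The function `f₀(x) = min(2x₁,2x₂,2x₃,a+x₁,b+x₂,c+x₃,d) − (x₁+x₂+x₃)`,
with `∞` terms omitted from the minimum.  (The minimum is never `⊤` since the
real terms `2xᵢ` are always present, so `untop' 0` extracts its real value.) -/
def f0 (a b c d : WithTop ℝ) (x : R3) : ℝ :=
  (tmin a b c d x).untopD 0 - (x.1 + x.2.1 + x.2.2)

/-- The skeleton `Sk(a,b,c,d)`. -/
def Sk (a b c d : WithTop ℝ) : Set R3 := {x | f0 a b c d x = 0}

/-- `mz t r` is `min(0, t − r)` for `t ∈ ℝ ∪ {∞}` and `r ∈ ℝ`, with the convention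
`min(0, ∞ − r) = 0`. -/
def mz (t : WithTop ℝ) (r : ℝ) : ℝ := (min (r : WithTop ℝ) t).untopD 0 - r

lemma mz_top (r : ℝ) : mz ⊤ r = 0 := by simp [mz]

lemma mz_coe (t' r : ℝ) : mz (t' : WithTop ℝ) r = min r t' - r := by
  rw [mz, ← WithTop.coe_min]; rfl

lemma mz_nonpos (t : WithTop ℝ) (r : ℝ) : mz t r ≤ 0 := by
  induction t using WithTop.recTopCoe with
  | top => simp [mz_top]
  | coe t' => rw [mz_coe]; have := min_le_left r t'; linarith

lemma fwd1 (t : WithTop ℝ) (r x : ℝ) (h1 : (r : WithTop ℝ) < t + (x : WithTop ℝ))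
    (h2 : r < 2 * x) : r - 2 * x < mz (t + t) r := by
  induction t using WithTop.recTopCoe with
  | top => rw [top_add, mz_top]; linarith
  | coe t' =>
    rw [← WithTop.coe_add, WithTop.coe_lt_coe] at h1
    rw [← WithTop.coe_add, mz_coe]
    have h3 := lt_min (show r - 2*x + r < r by linarith)
      (show r - 2*x + r < t' + t' by linarith)
    linarith [h3]

lemma bwd1 (t : WithTop ℝ) (r x : ℝ) (h : r - 2 * x < mz (t + t) r) :
    (r : WithTop ℝ) < t + (x : WithTop ℝ) := by
  induction t using WithTop.recTopCoe with
  | top => rw [top_add]; exact WithTop.coe_lt_top r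
  | coe t' =>
    rw [← WithTop.coe_add, mz_coe] at h
    rw [← WithTop.coe_add, WithTop.coe_lt_coe]
    have := min_le_right r (t' + t')
    linarith

lemma fwd2 (t : WithTop ℝ) (r u x : ℝ) (h1 : (u : WithTop ℝ) < t + (x : WithTop ℝ))
    (h2 : u < 2 * x) (h3 : 2 * r < u) : u / 2 - x < mz t r := by
  induction t using WithTop.recTopCoe with
  | top => rw [mz_top]; linarith
  | coe t' =>
    rw [← WithTop.coe_add, WithTop.coe_lt_coe] at h1
    rw [mz_coe]
    have h4 := lt_min (show u/2 - x + r < r by linarith)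
      (show u/2 - x + r < t' by linarith)
    linarith [h4]

lemma bwd3 (t : WithTop ℝ) (r u x : ℝ) (h : u - x - r < mz t r) :
    (u : WithTop ℝ) < t + (x : WithTop ℝ) := by
  induction t using WithTop.recTopCoe with
  | top => rw [top_add]; exact WithTop.coe_lt_top u
  | coe t' =>
    rw [mz_coe] at h
    rw [← WithTop.coe_add, WithTop.coe_lt_coe]
    have := min_le_right r t'
    linarith

lemma exists_delta (d : WithTop ℝ) (r : ℝ) (h : (r : WithTop ℝ) < d) :
    ∃ δ : ℝ, 0 < δ ∧ ((r + δ : ℝ) : WithTop ℝ) < d := by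
  induction d using WithTop.recTopCoe with
  | top => exact ⟨1, one_pos, WithTop.coe_lt_top _⟩
  | coe d' =>
    rw [WithTop.coe_lt_coe] at h
    exact ⟨(d' - r)/2, by linarith, WithTop.coe_lt_coe.mpr (by linarith)⟩

theorem statement4 (a b c d : WithTop ℝ) :
    (∀ d' : ℝ, d = (d' : WithTop ℝ) →
      ((∃ x : R3, x.1 + x.2.1 + x.2.2 = d' ∧
          (d' : WithTop ℝ) <
            min (min ((2 * x.1 : ℝ) : WithTop ℝ) ((2 * x.2.1 : ℝ) : WithTop ℝ))
              (min ((2 * x.2.2 : ℝ) : WithTop ℝ)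
                (min (a + (x.1 : WithTop ℝ))
                  (min (b + (x.2.1 : WithTop ℝ)) (c + (x.2.2 : WithTop ℝ)))))) ↔
        d' < mz (a + a) d' + mz (b + b) d' + mz (c + c) d')) ∧
    (∀ a' : ℝ, a = (a' : WithTop ℝ) →
      ((∃ x : R3, x.2.1 + x.2.2 = a' ∧
          ((a' + x.1 : ℝ) : WithTop ℝ) <
            min (min ((2 * x.1 : ℝ) : WithTop ℝ) ((2 * x.2.1 : ℝ) : WithTop ℝ))
              (min ((2 * x.2.2 : ℝ) : WithTop ℝ)
                (min (b + (x.2.1 : WithTop ℝ))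
                  (min (c + (x.2.2 : WithTop ℝ)) d)))) ↔
        (a' < mz b a' + mz c a' ∧ ((2 * a' : ℝ) : WithTop ℝ) < d))) := by
  constructor
  · -- Part 1: the cell 𝒞(D)
    intro d' hd
    constructor
    · rintro ⟨⟨x₁, x₂, x₃⟩, hsum, hlt⟩
      dsimp only at hsum hlt
      simp only [lt_min_iff] at hlt
      obtain ⟨⟨g1, g2⟩, g3, g4, g5, g6⟩ := hlt
      have e1 := WithTop.coe_lt_coe.mp g1
      have e2 := WithTop.coe_lt_coe.mp g2
      have e3 := WithTop.coe_lt_coe.mp g3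
      have f1 := fwd1 a d' x₁ g4 e1
      have f2 := fwd1 b d' x₂ g5 e2
      have f3 := fwd1 c d' x₃ g6 e3
      linarith
    · intro h
      have hMA := mz_nonpos (a + a) d'
      have hMB := mz_nonpos (b + b) d'
      have hMC := mz_nonpos (c + c) d'
      refine ⟨(d'/2 - mz (a+a) d'/2 + (mz (a+a) d' + mz (b+b) d' + mz (c+c) d' - d')/6,
               d'/2 - mz (b+b) d'/2 + (mz (a+a) d' + mz (b+b) d' + mz (c+c) d' - d')/6,
               d'/2 - mz (c+c) d'/2 + (mz (a+a) d' + mz (b+b) d' + mz (c+c) d' - d')/6),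
        by dsimp only; ring, ?_⟩
      dsimp only
      simp only [lt_min_iff]
      exact ⟨⟨WithTop.coe_lt_coe.mpr (by linarith), WithTop.coe_lt_coe.mpr (by linarith)⟩,
        WithTop.coe_lt_coe.mpr (by linarith),
        bwd1 a d' _ (by linarith), bwd1 b d' _ (by linarith), bwd1 c d' _ (by linarith)⟩
  · -- Part 2: the cell 𝒞(AX₁)
    intro a' ha
    constructor
    · rintro ⟨⟨x₁, x₂, x₃⟩, hsum, hlt⟩
      dsimp only at hsum hlt
      simp only [lt_min_iff] at hlt
      obtain ⟨⟨g1, g2⟩, g3, g4, g5, g6⟩ := hlt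
      have e1 := WithTop.coe_lt_coe.mp g1
      have e2 := WithTop.coe_lt_coe.mp g2
      have e3 := WithTop.coe_lt_coe.mp g3
      have hu : 2 * a' < a' + x₁ := by linarith
      have f2 := fwd2 b a' (a' + x₁) x₂ g4 e2 hu
      have f3 := fwd2 c a' (a' + x₁) x₃ g5 e3 hu
      exact ⟨by linarith, lt_trans (WithTop.coe_lt_coe.mpr hu) g6⟩
    · rintro ⟨h1, h2⟩
      obtain ⟨δ, hδ, hδd⟩ := exists_delta d (2 * a') h2
      have hMB := mz_nonpos b a'
      have hMC := mz_nonpos c a'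
      have hε : 0 < (mz b a' + mz c a' - a')/4 := by linarith
      have hδ'1 : 0 < min ((mz b a' + mz c a' - a')/4) δ := lt_min hε hδ
      have hδ'2 : min ((mz b a' + mz c a' - a')/4) δ ≤ (mz b a' + mz c a' - a')/4 :=
        min_le_left _ _
      have hδ'3 : min ((mz b a' + mz c a' - a')/4) δ ≤ δ := min_le_right _ _
      set δ' := min ((mz b a' + mz c a' - a')/4) δ with hδ'def
      have hη : 0 < 2 * ((mz b a' + mz c a' - a')/4) - δ' := by linarith
      refine ⟨(a' + δ',
               a' + δ' - mz b a' + (2 * ((mz b a' + mz c a' - a')/4) - δ'),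
               a' + δ' - mz c a' + (2 * ((mz b a' + mz c a' - a')/4) - δ')),
        by dsimp only; ring, ?_⟩
      dsimp only
      simp only [lt_min_iff]
      refine ⟨⟨WithTop.coe_lt_coe.mpr (by linarith), WithTop.coe_lt_coe.mpr (by linarith)⟩,
        WithTop.coe_lt_coe.mpr (by linarith),
        bwd3 b a' _ _ (by linarith), bwd3 c a' _ _ (by linarith), ?_⟩
      have : ((a' + (a' + δ') : ℝ) : WithTop ℝ) ≤ ((2 * a' + δ : ℝ) : WithTop ℝ) :=
        WithTop.coe_le_coe.mpr (by linarith)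
      exact lt_of_le_of_lt this hδd
end
end

section
/- Let a, b, c, d ∈ ℝ ∪ {∞}. The following are equivalent: (a) every x ∈ Sk(a,b,c,d) satisfies x₁+x₂+x₃ = 2xᵢ for some i ∈ {1,2,3} (i.e. Sk(a,b,c,d) = 𝒞(X₁²) ∪ 𝒞(X₂²) ∪ 𝒞(X₃²)); (b) (0,0,0) ∈ Sk(a,b,c,d); (c) min(a,b,c,d) ≥ 0. -/
noncomputable section

lemma tmin_le1 (a b c d : WithTop ℝ) (x : R3) :
    tmin a b c d x ≤ ((2 * x.1 : ℝ) : WithTop ℝ) :=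
  le_trans (min_le_left _ _) (le_trans (min_le_left _ _) (min_le_left _ _))
lemma tmin_ne_top (a b c d : WithTop ℝ) (x : R3) : tmin a b c d x ≠ ⊤ := by
  intro h
  have := tmin_le1 a b c d x
  rw [h, top_le_iff] at this
  exact (WithTop.coe_ne_top this)
lemma mem_Sk_iff (a b c d : WithTop ℝ) (x : R3) :
    x ∈ Sk a b c d ↔ tmin a b c d x = ((x.1 + x.2.1 + x.2.2 : ℝ) : WithTop ℝ) := by
  obtain ⟨r, hr⟩ := WithTop.ne_top_iff_exists.mp (tmin_ne_top a b c d x)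
  simp only [Sk, Set.mem_setOf_eq, f0, ← hr, WithTop.untopD_coe, WithTop.coe_eq_coe,
    sub_eq_zero]
lemma mem_diag (a b c d : WithTop ℝ) (t : ℝ)
    (h1 : ((t + t + t : ℝ) : WithTop ℝ) ≤ ((2*t : ℝ) : WithTop ℝ))
    (h2 : ((t + t + t : ℝ) : WithTop ℝ) ≤ a + (t : WithTop ℝ))
    (h3 : ((t + t + t : ℝ) : WithTop ℝ) ≤ b + (t : WithTop ℝ))
    (h4 : ((t + t + t : ℝ) : WithTop ℝ) ≤ c + (t : WithTop ℝ))
    (h5 : ((t + t + t : ℝ) : WithTop ℝ) ≤ d)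
    (h6 : tmin a b c d (t, t, t) ≤ ((t + t + t : ℝ) : WithTop ℝ)) :
    ((t : ℝ), (t : ℝ), (t : ℝ)) ∈ Sk a b c d := by
  rw [mem_Sk_iff]
  refine le_antisymm h6 ?_
  simp only [tmin, le_min_iff]
  exact ⟨⟨⟨h1, h1⟩, h1, h2⟩, ⟨h3, h4⟩, h5⟩

lemma diag_parts (a b c d : WithTop ℝ) (m : ℝ) (hm0 : m < 0)
    (hma : (m : WithTop ℝ) ≤ a) (hmb : (m : WithTop ℝ) ≤ b) (hmc : (m : WithTop ℝ) ≤ c) :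
    ∀ e : WithTop ℝ, (m : WithTop ℝ) ≤ e →
      ((m/2 + m/2 + m/2 : ℝ) : WithTop ℝ) ≤ e + ((m/2 : ℝ) : WithTop ℝ) := by
  intro e he
  calc ((m/2 + m/2 + m/2 : ℝ) : WithTop ℝ)
      = (m : WithTop ℝ) + ((m/2 : ℝ) : WithTop ℝ) := by
        rw [← WithTop.coe_add, WithTop.coe_eq_coe]; ring
    _ ≤ e + ((m/2 : ℝ) : WithTop ℝ) := add_le_add_left he _

lemma neTriple (t : ℝ) (ht : t < 0) :
    ¬((((t:ℝ), (t:ℝ), (t:ℝ)) : R3).1 + ((t:ℝ), (t:ℝ), (t:ℝ)).2.1 + ((t:ℝ), (t:ℝ), (t:ℝ)).2.2 = 2 * (((t:ℝ), (t:ℝ), (t:ℝ)) : R3).1 ∨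
      (((t:ℝ), (t:ℝ), (t:ℝ)) : R3).1 + ((t:ℝ), (t:ℝ), (t:ℝ)).2.1 + ((t:ℝ), (t:ℝ), (t:ℝ)).2.2 = 2 * (((t:ℝ), (t:ℝ), (t:ℝ)) : R3).2.1 ∨
      (((t:ℝ), (t:ℝ), (t:ℝ)) : R3).1 + ((t:ℝ), (t:ℝ), (t:ℝ)).2.1 + ((t:ℝ), (t:ℝ), (t:ℝ)).2.2 = 2 * (((t:ℝ), (t:ℝ), (t:ℝ)) : R3).2.2) := by
  push_neg
  refine ⟨?_, ?_, ?_⟩ <;> · show ¬ (t + t + t = 2 * t); intro h; linarith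

lemma abcType (a b c d : WithTop ℝ) (m : ℝ) (hm0 : m < 0)
    (heq : a = (m : WithTop ℝ) ∨ b = (m : WithTop ℝ) ∨ c = (m : WithTop ℝ))
    (hma : (m : WithTop ℝ) ≤ a) (hmb : (m : WithTop ℝ) ≤ b) (hmc : (m : WithTop ℝ) ≤ c)
    (hd : ((3*m/2 : ℝ) : WithTop ℝ) ≤ d) :
    ∃ x ∈ Sk a b c d,
      ¬(x.1 + x.2.1 + x.2.2 = 2 * x.1 ∨ x.1 + x.2.1 + x.2.2 = 2 * x.2.1 ∨
          x.1 + x.2.1 + x.2.2 = 2 * x.2.2) := by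
  have key := diag_parts a b c d m hm0 hma hmb hmc
  have hsum : (m/2 + m/2 + m/2 : ℝ) = 3*m/2 := by ring
  refine ⟨((m/2 : ℝ), (m/2 : ℝ), (m/2 : ℝ)), ?_, neTriple (m/2) (by linarith)⟩
  apply mem_diag
  · rw [WithTop.coe_le_coe]; linarith
  · exact key a hma
  · exact key b hmb
  · exact key c hmc
  · rw [hsum]; exact hd
  · -- tmin ≤ coe sum : go via the term that equals m + m/2
    have hterm : ∀ e : WithTop ℝ, e = (m : WithTop ℝ) →
        e + ((m/2 : ℝ) : WithTop ℝ) = ((m/2 + m/2 + m/2 : ℝ) : WithTop ℝ) := by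
      intro e he
      rw [he, ← WithTop.coe_add, WithTop.coe_eq_coe]; ring
    rcases heq with he | he | he
    · refine le_trans (le_trans (min_le_left _ _) (le_trans (min_le_right _ _)
        (min_le_right _ _))) ?_
      exact le_of_eq (hterm a he)
    · refine le_trans (le_trans (min_le_right _ _) (le_trans (min_le_left _ _)
        (min_le_left _ _))) ?_
      exact le_of_eq (hterm b he)
    · refine le_trans (le_trans (min_le_right _ _) (le_trans (min_le_left _ _)
        (min_le_right _ _))) ?_
      exact le_of_eq (hterm c he)

lemma dType (a b c d : WithTop ℝ) (dR : ℝ) (hdd : d = (dR : WithTop ℝ)) (h0 : dR < 0)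
    (ha : ((2*dR/3 : ℝ) : WithTop ℝ) ≤ a) (hb : ((2*dR/3 : ℝ) : WithTop ℝ) ≤ b)
    (hc : ((2*dR/3 : ℝ) : WithTop ℝ) ≤ c) :
    ∃ x ∈ Sk a b c d,
      ¬(x.1 + x.2.1 + x.2.2 = 2 * x.1 ∨ x.1 + x.2.1 + x.2.2 = 2 * x.2.1 ∨
          x.1 + x.2.1 + x.2.2 = 2 * x.2.2) := by
  have hsum : (dR/3 + dR/3 + dR/3 : ℝ) = dR := by ring
  have key : ∀ e : WithTop ℝ, ((2*dR/3 : ℝ) : WithTop ℝ) ≤ e →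
      ((dR/3 + dR/3 + dR/3 : ℝ) : WithTop ℝ) ≤ e + ((dR/3 : ℝ) : WithTop ℝ) := by
    intro e he
    calc ((dR/3 + dR/3 + dR/3 : ℝ) : WithTop ℝ)
        = ((2*dR/3 : ℝ) : WithTop ℝ) + ((dR/3 : ℝ) : WithTop ℝ) := by
          rw [← WithTop.coe_add, WithTop.coe_eq_coe]; ring
      _ ≤ e + ((dR/3 : ℝ) : WithTop ℝ) := add_le_add_left he _
  refine ⟨((dR/3 : ℝ), (dR/3 : ℝ), (dR/3 : ℝ)), ?_, neTriple (dR/3) (by linarith)⟩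
  apply mem_diag
  · rw [WithTop.coe_le_coe]; linarith
  · exact key a ha
  · exact key b hb
  · exact key c hc
  · rw [hsum, hdd]
  · refine le_trans (min_le_right _ _) (le_trans (min_le_right _ _) ?_)
    rw [hdd, hsum]

lemma converse (a b c d : WithTop ℝ) (hlt : min (min a b) (min c d) < 0) :
    ∃ x ∈ Sk a b c d,
      ¬(x.1 + x.2.1 + x.2.2 = 2 * x.1 ∨ x.1 + x.2.1 + x.2.2 = 2 * x.2.1 ∨
          x.1 + x.2.1 + x.2.2 = 2 * x.2.2) := by
  rcases lt_or_ge (min a (min b c)) 0 with hm | hm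
  · obtain ⟨m, hm'⟩ := WithTop.ne_top_iff_exists.mp (ne_top_of_lt hm)
    have hm0 : m < 0 := by rw [← hm'] at hm; exact_mod_cast hm
    have hma : (m : WithTop ℝ) ≤ a := le_trans (le_of_eq hm') (min_le_left _ _)
    have hmb : (m : WithTop ℝ) ≤ b :=
      le_trans (le_of_eq hm') (le_trans (min_le_right _ _) (min_le_left _ _))
    have hmc : (m : WithTop ℝ) ≤ c :=
      le_trans (le_of_eq hm') (le_trans (min_le_right _ _) (min_le_right _ _))
    rcases le_or_gt ((3*m/2 : ℝ) : WithTop ℝ) d with hd | hd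
    · have heq : a = (m : WithTop ℝ) ∨ b = (m : WithTop ℝ) ∨ c = (m : WithTop ℝ) := by
        rcases min_eq_iff.mp hm'.symm with ⟨h, -⟩ | ⟨h, -⟩
        · exact Or.inl h
        · rcases min_eq_iff.mp h with ⟨h, -⟩ | ⟨h, -⟩
          · exact Or.inr (Or.inl h)
          · exact Or.inr (Or.inr h)
      exact abcType a b c d m hm0 heq hma hmb hmc hd
    · obtain ⟨dR, hdR⟩ := WithTop.ne_top_iff_exists.mp (ne_top_of_lt hd)
      have hdR1 : dR < 3*m/2 := by rw [← hdR] at hd; exact_mod_cast hd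
      have hkey : ((2*dR/3 : ℝ) : WithTop ℝ) ≤ (m : WithTop ℝ) := by
        rw [WithTop.coe_le_coe]; linarith
      exact dType a b c d dR hdR.symm (by linarith)
        (le_trans hkey hma) (le_trans hkey hmb) (le_trans hkey hmc)
  · have h0a : (0 : WithTop ℝ) ≤ a := le_trans hm (min_le_left _ _)
    have h0b : (0 : WithTop ℝ) ≤ b :=
      le_trans hm (le_trans (min_le_right _ _) (min_le_left _ _))
    have h0c : (0 : WithTop ℝ) ≤ c :=
      le_trans hm (le_trans (min_le_right _ _) (min_le_right _ _))
    have hd : d < 0 := by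
      rcases min_lt_iff.mp hlt with h | h
      · rcases min_lt_iff.mp h with h | h
        · exact absurd h (not_lt.mpr h0a)
        · exact absurd h (not_lt.mpr h0b)
      · rcases min_lt_iff.mp h with h | h
        · exact absurd h (not_lt.mpr h0c)
        · exact h
    obtain ⟨dR, hdR⟩ := WithTop.ne_top_iff_exists.mp (ne_top_of_lt hd)
    have hdR0 : dR < 0 := by rw [← hdR] at hd; exact_mod_cast hd
    have hkey : ((2*dR/3 : ℝ) : WithTop ℝ) ≤ (0 : WithTop ℝ) := by
      exact_mod_cast (by linarith : (2*dR/3 : ℝ) ≤ 0)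
    exact dType a b c d dR hdR.symm hdR0
      (le_trans hkey h0a) (le_trans hkey h0b) (le_trans hkey h0c)

lemma tmin_le2 (a b c d : WithTop ℝ) (x : R3) :
    tmin a b c d x ≤ ((2 * x.2.1 : ℝ) : WithTop ℝ) :=
  le_trans (min_le_left _ _) (le_trans (min_le_left _ _) (min_le_right _ _))

lemma tmin_le3 (a b c d : WithTop ℝ) (x : R3) :
    tmin a b c d x ≤ ((2 * x.2.2 : ℝ) : WithTop ℝ) :=
  le_trans (min_le_left _ _) (le_trans (min_le_right _ _) (min_le_left _ _))


theorem forward (a b c d : WithTop ℝ)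
    (hmin : (0 : WithTop ℝ) ≤ min (min a b) (min c d)) :
    ∀ x ∈ Sk a b c d,
        x.1 + x.2.1 + x.2.2 = 2 * x.1 ∨ x.1 + x.2.1 + x.2.2 = 2 * x.2.1 ∨
          x.1 + x.2.1 + x.2.2 = 2 * x.2.2 := by
  have ha0 : (0 : WithTop ℝ) ≤ a := le_trans hmin (le_trans (min_le_left _ _) (min_le_left _ _))
  have hb0 : (0 : WithTop ℝ) ≤ b := le_trans hmin (le_trans (min_le_left _ _) (min_le_right _ _))
  have hc0 : (0 : WithTop ℝ) ≤ c := le_trans hmin (le_trans (min_le_right _ _) (min_le_left _ _))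
  have hd0 : (0 : WithTop ℝ) ≤ d := le_trans hmin (le_trans (min_le_right _ _) (min_le_right _ _))
  intro x hx
  rw [mem_Sk_iff] at hx
  have hr1 : x.1 + x.2.1 + x.2.2 ≤ 2 * x.1 := by
    have := hx ▸ tmin_le1 a b c d x; exact_mod_cast this
  have hr2 : x.1 + x.2.1 + x.2.2 ≤ 2 * x.2.1 := by
    have := hx ▸ tmin_le2 a b c d x; exact_mod_cast this
  have hr3 : x.1 + x.2.1 + x.2.2 ≤ 2 * x.2.2 := by
    have := hx ▸ tmin_le3 a b c d x; exact_mod_cast this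
  simp only [tmin] at hx
  rcases min_eq_iff.mp hx with ⟨h, -⟩ | ⟨h, -⟩
  · rcases min_eq_iff.mp h with ⟨h, -⟩ | ⟨h, -⟩
    · rcases min_eq_iff.mp h with ⟨h, -⟩ | ⟨h, -⟩
      · exact Or.inl (by exact_mod_cast h.symm)
      · exact Or.inr (Or.inl (by exact_mod_cast h.symm))
    · rcases min_eq_iff.mp h with ⟨h, -⟩ | ⟨h, -⟩
      · exact Or.inr (Or.inr (by exact_mod_cast h.symm))
      · -- a + x1 case
        have hat : a ≠ ⊤ := by rintro rfl; rw [top_add] at h; exact WithTop.top_ne_coe h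
        lift a to ℝ using hat with ar
        have har0 : (0 : ℝ) ≤ ar := by exact_mod_cast ha0
        have hre : ar + x.1 = x.1 + x.2.1 + x.2.2 := by exact_mod_cast h
        exact Or.inl (by linarith)
  · rcases min_eq_iff.mp h with ⟨h, -⟩ | ⟨h, -⟩
    · rcases min_eq_iff.mp h with ⟨h, -⟩ | ⟨h, -⟩
      · have hbt : b ≠ ⊤ := by rintro rfl; rw [top_add] at h; exact WithTop.top_ne_coe h
        lift b to ℝ using hbt with br
        have hbr0 : (0 : ℝ) ≤ br := by exact_mod_cast hb0
        have hre : br + x.2.1 = x.1 + x.2.1 + x.2.2 := by exact_mod_cast h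
        exact Or.inr (Or.inl (by linarith))
      · have hct : c ≠ ⊤ := by rintro rfl; rw [top_add] at h; exact WithTop.top_ne_coe h
        lift c to ℝ using hct with cr
        have hcr0 : (0 : ℝ) ≤ cr := by exact_mod_cast hc0
        have hre : cr + x.2.2 = x.1 + x.2.1 + x.2.2 := by exact_mod_cast h
        exact Or.inr (Or.inr (by linarith))
    · -- d case
      have hdt : d ≠ ⊤ := by rintro rfl; exact WithTop.top_ne_coe h
      lift d to ℝ using hdt with dr
      have hdr0 : (0 : ℝ) ≤ dr := by exact_mod_cast hd0
      have hre : dr = x.1 + x.2.1 + x.2.2 := by exact_mod_cast h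
      exact Or.inl (by linarith)

theorem zeroPart (a b c d : WithTop ℝ) :
    ((((0 : ℝ), (0 : ℝ), (0 : ℝ)) : R3) ∈ Sk a b c d) ↔
      (0 : WithTop ℝ) ≤ min (min a b) (min c d) := by
  rw [mem_Sk_iff]
  simp only [tmin, mul_zero, add_zero, WithTop.coe_zero, min_self]
  constructor
  · intro h
    simp only [le_min_iff]
    refine ⟨⟨?_, ?_⟩, ?_, ?_⟩
    · exact le_trans (le_of_eq h.symm) (le_trans (min_le_left _ _)
        (le_trans (min_le_right _ _) (min_le_right _ _)))
    · exact le_trans (le_of_eq h.symm) (le_trans (min_le_right _ _)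
        (le_trans (min_le_left _ _) (min_le_left _ _)))
    · exact le_trans (le_of_eq h.symm) (le_trans (min_le_right _ _)
        (le_trans (min_le_left _ _) (min_le_right _ _)))
    · exact le_trans (le_of_eq h.symm) (le_trans (min_le_right _ _) (min_le_right _ _))
  · intro h
    simp only [le_min_iff] at h
    obtain ⟨⟨h0a, h0b⟩, h0c, h0d⟩ := h
    apply le_antisymm
    · exact le_trans (min_le_left _ _) (min_le_left _ _)
    · simp only [le_min_iff]
      exact ⟨⟨le_refl _, le_refl _, h0a⟩, ⟨h0b, h0c⟩, h0d⟩

theorem statement5 (a b c d : WithTop ℝ) :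
    ((∀ x ∈ Sk a b c d,
        x.1 + x.2.1 + x.2.2 = 2 * x.1 ∨ x.1 + x.2.1 + x.2.2 = 2 * x.2.1 ∨
          x.1 + x.2.1 + x.2.2 = 2 * x.2.2) ↔
      (0 : WithTop ℝ) ≤ min (min a b) (min c d)) ∧
    ((((0 : ℝ), (0 : ℝ), (0 : ℝ)) ∈ Sk a b c d) ↔
      (0 : WithTop ℝ) ≤ min (min a b) (min c d)) := by
  refine ⟨⟨fun hyp => ?_, forward a b c d⟩, zeroPart a b c d⟩
  by_contra hlt
  rw [not_le] at hlt
  obtain ⟨x, hxS, hxne⟩ := converse a b c d hlt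
  exact hxne (hyp x hxS)
end
end

section
/- Let a, b, c, d ∈ ℝ ∪ {∞} and w ∈ ℝ. The following are equivalent: (a) w ≥ −min(a, b, c, d/2); (b) every x ∈ ℝ³ with f₀(x) = w satisfies w + x₁+x₂+x₃ = 2xᵢ for some i ∈ {1,2,3}; (c) {x ∈ ℝ³ : f₀(x) = w} = {y − (w,w,w) : y ∈ ℝ³ and min(2y₁, 2y₂, 2y₃) = y₁+y₂+y₃}, i.e. the level set is the translate of Sk(∞,∞,∞,∞) by (−w,−w,−w). -/
noncomputable section

/-- Condition (a): `w ≥ −min(a, b, c, d/2)`, i.e. `−w ≤ a`, `−w ≤ b`, `−w ≤ c` and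
`−2w ≤ d`, in `ℝ ∪ {∞}` (it holds automatically against `∞` terms). -/
def aboveThreshold (a b c d : WithTop ℝ) (w : ℝ) : Prop :=
  ((-w : ℝ) : WithTop ℝ) ≤ min (min a b) c ∧ ((-(2 * w) : ℝ) : WithTop ℝ) ≤ d

lemma tmin_eq_coe_iff (a b c d : WithTop ℝ) (x : R3) (m : ℝ) :
    tmin a b c d x = ↑m ↔
      ((m ≤ 2*x.1 ∧ m ≤ 2*x.2.1 ∧ m ≤ 2*x.2.2 ∧ (↑m:WithTop ℝ) ≤ a + ↑x.1 ∧
        (↑m:WithTop ℝ) ≤ b + ↑x.2.1 ∧ (↑m:WithTop ℝ) ≤ c + ↑x.2.2 ∧ (↑m:WithTop ℝ) ≤ d) ∧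
       (2*x.1 ≤ m ∨ 2*x.2.1 ≤ m ∨ 2*x.2.2 ≤ m ∨ a + ↑x.1 ≤ (↑m:WithTop ℝ) ∨
        b + ↑x.2.1 ≤ (↑m:WithTop ℝ) ∨ c + ↑x.2.2 ≤ (↑m:WithTop ℝ) ∨ d ≤ (↑m:WithTop ℝ))) := by
  rw [le_antisymm_iff (a := tmin a b c d x), and_comm]
  unfold tmin
  simp only [le_min_iff, min_le_iff, and_assoc, or_assoc]
  norm_cast

lemma f0_eq_iff (a b c d : WithTop ℝ) (x : R3) (w : ℝ) :
    f0 a b c d x = w ↔ tmin a b c d x = ↑(w + (x.1 + x.2.1 + x.2.2)) := by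
  have hne : tmin a b c d x ≠ ⊤ := by
    intro h
    have : tmin a b c d x ≤ ((2 * x.1 : ℝ) : WithTop ℝ) :=
      le_trans (min_le_left _ _) (le_trans (min_le_left _ _) (min_le_left _ _))
    rw [h] at this
    exact (WithTop.coe_lt_top _).not_ge this
  obtain ⟨m, hm⟩ := WithTop.ne_top_iff_exists.mp hne
  rw [← hm, f0, ← hm, WithTop.untopD_coe, WithTop.coe_inj]
  constructor <;> intro h <;> linarith

lemma exists_real_of_add_le (a : WithTop ℝ) (x m : ℝ) (h : a + ↑x ≤ ↑m) :
    ∃ α : ℝ, a = ↑α ∧ α + x ≤ m := by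
  cases a with
  | top => simp at h
  | coe α => exact ⟨α, rfl, by exact_mod_cast h⟩

lemma coe_le_add (a : WithTop ℝ) (x m α : ℝ) (ha : (↑α:WithTop ℝ) ≤ a) (h : m ≤ α + x) :
    (↑m:WithTop ℝ) ≤ a + ↑x :=
  calc (↑m : WithTop ℝ) ≤ ↑(α + x) := by exact_mod_cast h
    _ = ↑α + ↑x := by push_cast; ring_nf
    _ ≤ a + ↑x := by gcongr

/-- (a) → (b) -/
lemma a_to_b (a b c d : WithTop ℝ) (w : ℝ) (h : aboveThreshold a b c d w) :
    ∀ x : R3, f0 a b c d x = w →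
      (w + (x.1 + x.2.1 + x.2.2) = 2 * x.1 ∨ w + (x.1 + x.2.1 + x.2.2) = 2 * x.2.1 ∨
        w + (x.1 + x.2.1 + x.2.2) = 2 * x.2.2) := by
  obtain ⟨hA, hD⟩ := h
  have ha : ((-w : ℝ) : WithTop ℝ) ≤ a :=
    le_trans hA (le_trans (min_le_left _ _) (min_le_left _ _))
  have hb : ((-w : ℝ) : WithTop ℝ) ≤ b :=
    le_trans hA (le_trans (min_le_left _ _) (min_le_right _ _))
  have hc : ((-w : ℝ) : WithTop ℝ) ≤ c := le_trans hA (min_le_right _ _)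
  intro x hx
  rw [f0_eq_iff, tmin_eq_coe_iff] at hx
  obtain ⟨⟨h1, h2, h3, h4, h5, h6, h7⟩, hcase⟩ := hx
  by_contra hcon
  push_neg at hcon
  obtain ⟨n1, n2, n3⟩ := hcon
  have s1 : w + (x.1 + x.2.1 + x.2.2) < 2*x.1 := lt_of_le_of_ne h1 n1
  have s2 : w + (x.1 + x.2.1 + x.2.2) < 2*x.2.1 := lt_of_le_of_ne h2 n2
  have s3 : w + (x.1 + x.2.1 + x.2.2) < 2*x.2.2 := lt_of_le_of_ne h3 n3
  rcases hcase with h | h | h | h | h | h | h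
  · linarith
  · linarith
  · linarith
  · obtain ⟨α, rfl, hle⟩ := exists_real_of_add_le _ _ _ h
    have : -w ≤ α := by exact_mod_cast ha
    linarith
  · obtain ⟨α, rfl, hle⟩ := exists_real_of_add_le _ _ _ h
    have : -w ≤ α := by exact_mod_cast hb
    linarith
  · obtain ⟨α, rfl, hle⟩ := exists_real_of_add_le _ _ _ h
    have : -w ≤ α := by exact_mod_cast hc
    linarith
  · have hdc : d ≤ ↑(w + (x.1 + x.2.1 + x.2.2)) := h
    have h8 : ((-(2*w) : ℝ) : WithTop ℝ) ≤ ↑(w + (x.1 + x.2.1 + x.2.2)) := le_trans hD hdc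
    have : -(2*w) ≤ w + (x.1 + x.2.1 + x.2.2) := by exact_mod_cast h8
    linarith
/-- (b) → (a) -/
lemma b_to_a (a b c d : WithTop ℝ) (w : ℝ)
    (hB : ∀ x : R3, f0 a b c d x = w →
      (w + (x.1 + x.2.1 + x.2.2) = 2 * x.1 ∨ w + (x.1 + x.2.1 + x.2.2) = 2 * x.2.1 ∨
        w + (x.1 + x.2.1 + x.2.2) = 2 * x.2.2)) :
    aboveThreshold a b c d w := by
  have hA : ((-w : ℝ) : WithTop ℝ) ≤ min (min a b) c := by
    by_contra hA
    rw [not_le] at hA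
    obtain ⟨α, heq, hlt⟩ := WithTop.lt_iff_exists_coe.mp hA
    have hα : α < -w := by exact_mod_cast hlt
    have ha : (↑α : WithTop ℝ) ≤ a := heq ▸ le_trans (min_le_left _ _) (min_le_left _ _)
    have hb : (↑α : WithTop ℝ) ≤ b := heq ▸ le_trans (min_le_left _ _) (min_le_right _ _)
    have hc : (↑α : WithTop ℝ) ≤ c := heq ▸ min_le_right _ _
    have habc : a ≤ ↑α ∨ b ≤ ↑α ∨ c ≤ ↑α := by
      have := heq.le
      rcases min_le_iff.mp this with h | h
      · rcases min_le_iff.mp h with h | h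
        · exact Or.inl h
        · exact Or.inr (Or.inl h)
      · exact Or.inr (Or.inr h)
    set t : ℝ := (α - w)/2 with ht
    by_cases hd : (↑(w + (t + t + t)) : WithTop ℝ) ≤ d
    · -- use x = (t,t,t)
      have hf : f0 a b c d (t, t, t) = w := by
        rw [f0_eq_iff, tmin_eq_coe_iff]
        have hmα : w + ((t,t,t) : R3).1 + (t + t) = α + t := by simp; ring
        refine ⟨⟨by simp; linarith, by simp; linarith, by simp; linarith,
          coe_le_add a t _ α ha (by simp; linarith),
          coe_le_add b t _ α hb (by simp; linarith),
          coe_le_add c t _ α hc (by simp; linarith), hd⟩, ?_⟩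
        have hcoe : (↑(w + (((t,t,t):R3).1 + ((t,t,t):R3).2.1 + ((t,t,t):R3).2.2)) : WithTop ℝ)
            = ↑(α + t) := by norm_cast; simp; ring
        rcases habc with h | h | h
        · exact Or.inr (Or.inr (Or.inr (Or.inl (by
            rw [hcoe]
            calc a + (↑t : WithTop ℝ) ≤ ↑α + ↑t := by gcongr
              _ = ↑(α + t) := by norm_cast))))
        · exact Or.inr (Or.inr (Or.inr (Or.inr (Or.inl (by
            rw [hcoe]
            calc b + (↑t : WithTop ℝ) ≤ ↑α + ↑t := by gcongr
              _ = ↑(α + t) := by norm_cast)))))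
        · exact Or.inr (Or.inr (Or.inr (Or.inr (Or.inr (Or.inl (by
            rw [hcoe]
            calc c + (↑t : WithTop ℝ) ≤ ↑α + ↑t := by gcongr
              _ = ↑(α + t) := by norm_cast))))))
      rcases hB (t, t, t) hf with h | h | h <;> simp at h <;> linarith
    · rw [not_le] at hd
      obtain ⟨δ, hdeq, hdlt⟩ := WithTop.lt_iff_exists_coe.mp hd
      have hδ : δ < w + (t + t + t) := by exact_mod_cast hdlt
      have hδ2 : δ < -2*w := by rw [ht] at hδ; linarith
      set u : ℝ := (δ - w)/3 with hu
      have hmδ : w + (u + u + u) = δ := by rw [hu]; ring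
      have hf : f0 a b c d (u, u, u) = w := by
        rw [f0_eq_iff, tmin_eq_coe_iff]
        have hαu : δ ≤ α + u := by rw [hu, ht] at *; linarith
        refine ⟨⟨by simp; linarith, by simp; linarith, by simp; linarith,
          coe_le_add a u _ α ha (by simp; linarith),
          coe_le_add b u _ α hb (by simp; linarith),
          coe_le_add c u _ α hc (by simp; linarith),
          by rw [hdeq]; exact_mod_cast (by simp; linarith : w + (((u,u,u):R3).1 + ((u,u,u):R3).2.1 + ((u,u,u):R3).2.2) ≤ δ).ge⟩, ?_⟩
        refine Or.inr (Or.inr (Or.inr (Or.inr (Or.inr (Or.inr ?_)))))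
        rw [hdeq]
        exact_mod_cast (by simp; linarith : δ ≤ w + (((u,u,u):R3).1 + ((u,u,u):R3).2.1 + ((u,u,u):R3).2.2))
      rcases hB (u, u, u) hf with h | h | h <;> simp at h <;> linarith
  refine ⟨hA, ?_⟩
  by_contra hD
  rw [not_le] at hD
  obtain ⟨δ, hdeq, hdlt⟩ := WithTop.lt_iff_exists_coe.mp hD
  have hδ : δ < -(2*w) := by exact_mod_cast hdlt
  have ha : ((-w:ℝ) : WithTop ℝ) ≤ a := le_trans hA (le_trans (min_le_left _ _) (min_le_left _ _))
  have hb : ((-w:ℝ) : WithTop ℝ) ≤ b := le_trans hA (le_trans (min_le_left _ _) (min_le_right _ _))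
  have hc : ((-w:ℝ) : WithTop ℝ) ≤ c := le_trans hA (min_le_right _ _)
  set u : ℝ := (δ - w)/3 with hu
  have hmδ : w + (u + u + u) = δ := by rw [hu]; ring
  have hf : f0 a b c d (u, u, u) = w := by
    rw [f0_eq_iff, tmin_eq_coe_iff]
    have hαu : δ ≤ -w + u := by rw [hu]; linarith
    refine ⟨⟨by simp; linarith, by simp; linarith, by simp; linarith,
      coe_le_add a u _ (-w) ha (by simp; linarith),
      coe_le_add b u _ (-w) hb (by simp; linarith),
      coe_le_add c u _ (-w) hc (by simp; linarith),
      by rw [hdeq]; exact_mod_cast (by simp; linarith : w + (((u,u,u):R3).1 + ((u,u,u):R3).2.1 + ((u,u,u):R3).2.2) ≤ δ).ge⟩, ?_⟩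
    refine Or.inr (Or.inr (Or.inr (Or.inr (Or.inr (Or.inr ?_)))))
    rw [hdeq]
    exact_mod_cast (by simp; linarith : δ ≤ w + (((u,u,u):R3).1 + ((u,u,u):R3).2.1 + ((u,u,u):R3).2.2))
  rcases hB (u, u, u) hf with h | h | h <;> simp at h <;> linarith

/-- (a) → (c) -/
lemma a_to_c (a b c d : WithTop ℝ) (w : ℝ) (h : aboveThreshold a b c d w) :
    {x : R3 | f0 a b c d x = w} =
      (fun y : R3 => (y.1 - w, y.2.1 - w, y.2.2 - w)) ''
        {y : R3 | min (min (2 * y.1) (2 * y.2.1)) (2 * y.2.2) = y.1 + y.2.1 + y.2.2} := by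
  obtain ⟨hA, hD⟩ := h
  have ha : ((-w : ℝ) : WithTop ℝ) ≤ a :=
    le_trans hA (le_trans (min_le_left _ _) (min_le_left _ _))
  have hb : ((-w : ℝ) : WithTop ℝ) ≤ b :=
    le_trans hA (le_trans (min_le_left _ _) (min_le_right _ _))
  have hc : ((-w : ℝ) : WithTop ℝ) ≤ c := le_trans hA (min_le_right _ _)
  ext x
  simp only [Set.mem_setOf_eq, Set.mem_image]
  constructor
  · intro hx
    obtain ⟨x1, x2, x3⟩ := x
    have hdj := a_to_b a b c d w ⟨hA, hD⟩ (x1, x2, x3) hx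
    dsimp only at hdj
    rw [f0_eq_iff, tmin_eq_coe_iff] at hx
    obtain ⟨⟨h1, h2, h3, -, -, -, -⟩, -⟩ := hx
    dsimp only at h1 h2 h3
    refine ⟨(x1 + w, x2 + w, x3 + w), ?_, ?_⟩
    · show min (min (2*(x1+w)) (2*(x2+w))) (2*(x3+w)) = (x1+w) + (x2+w) + (x3+w)
      apply le_antisymm
      · rcases hdj with h | h | h
        · exact le_trans (min_le_left _ _) (le_trans (min_le_left _ _) (by linarith))
        · exact le_trans (min_le_left _ _) (le_trans (min_le_right _ _) (by linarith))
        · exact le_trans (min_le_right _ _) (by linarith)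
      · exact le_min (le_min (by linarith) (by linarith)) (by linarith)
    · show ((x1+w) - w, (x2+w) - w, (x3+w) - w) = (x1, x2, x3)
      norm_num
  · rintro ⟨y, hy, rfl⟩
    have hm1 : min (min (2*y.1) (2*y.2.1)) (2*y.2.2) ≤ 2*y.1 :=
      le_trans (min_le_left _ _) (min_le_left _ _)
    have hm2 : min (min (2*y.1) (2*y.2.1)) (2*y.2.2) ≤ 2*y.2.1 :=
      le_trans (min_le_left _ _) (min_le_right _ _)
    have hm3 : min (min (2*y.1) (2*y.2.1)) (2*y.2.2) ≤ 2*y.2.2 := min_le_right _ _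
    rw [hy] at hm1 hm2 hm3
    have hσ : y.1 + y.2.1 + y.2.2 ≤ 0 := by linarith
    have hdisj : 2*y.1 ≤ y.1 + y.2.1 + y.2.2 ∨ 2*y.2.1 ≤ y.1 + y.2.1 + y.2.2 ∨
        2*y.2.2 ≤ y.1 + y.2.1 + y.2.2 := by
      rcases min_le_iff.mp hy.le with h' | h'
      · rcases min_le_iff.mp h' with h'' | h''
        · exact Or.inl h''
        · exact Or.inr (Or.inl h'')
      · exact Or.inr (Or.inr h')
    rw [f0_eq_iff, tmin_eq_coe_iff]
    refine ⟨⟨by simp; linarith, by simp; linarith, by simp; linarith,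
      coe_le_add a _ _ (-w) ha (by simp; linarith),
      coe_le_add b _ _ (-w) hb (by simp; linarith),
      coe_le_add c _ _ (-w) hc (by simp; linarith),
      le_trans (WithTop.coe_le_coe.mpr (by simp; linarith :
        w + (((y.1 - w, y.2.1 - w, y.2.2 - w) : R3).1 +
          ((y.1 - w, y.2.1 - w, y.2.2 - w) : R3).2.1 +
          ((y.1 - w, y.2.1 - w, y.2.2 - w) : R3).2.2) ≤ -(2*w))) hD⟩, ?_⟩
    rcases hdisj with h' | h' | h'
    · exact Or.inl (by simp; linarith)
    · exact Or.inr (Or.inl (by simp; linarith))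
    · exact Or.inr (Or.inr (Or.inl (by simp; linarith)))

/-- (c) → (b) -/
lemma c_to_b (a b c d : WithTop ℝ) (w : ℝ)
    (h : {x : R3 | f0 a b c d x = w} =
      (fun y : R3 => (y.1 - w, y.2.1 - w, y.2.2 - w)) ''
        {y : R3 | min (min (2 * y.1) (2 * y.2.1)) (2 * y.2.2) = y.1 + y.2.1 + y.2.2}) :
    ∀ x : R3, f0 a b c d x = w →
      (w + (x.1 + x.2.1 + x.2.2) = 2 * x.1 ∨ w + (x.1 + x.2.1 + x.2.2) = 2 * x.2.1 ∨
        w + (x.1 + x.2.1 + x.2.2) = 2 * x.2.2) := by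
  intro x hx
  have hmem : x ∈ {x : R3 | f0 a b c d x = w} := hx
  rw [h] at hmem
  obtain ⟨y, hy, rfl⟩ := hmem
  simp only [Set.mem_setOf_eq] at hy
  have hm1 : min (min (2*y.1) (2*y.2.1)) (2*y.2.2) ≤ 2*y.1 :=
    le_trans (min_le_left _ _) (min_le_left _ _)
  have hm2 : min (min (2*y.1) (2*y.2.1)) (2*y.2.2) ≤ 2*y.2.1 :=
    le_trans (min_le_left _ _) (min_le_right _ _)
  have hm3 : min (min (2*y.1) (2*y.2.1)) (2*y.2.2) ≤ 2*y.2.2 := min_le_right _ _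
  rw [hy] at hm1 hm2 hm3
  rcases min_le_iff.mp hy.le with h' | h'
  · rcases min_le_iff.mp h' with h'' | h''
    · exact Or.inl (by simp; linarith)
    · exact Or.inr (Or.inl (by simp; linarith))
  · exact Or.inr (Or.inr (by simp; linarith))

theorem statement6 (a b c d : WithTop ℝ) (w : ℝ) :
    (aboveThreshold a b c d w ↔
      ∀ x : R3, f0 a b c d x = w →
        (w + (x.1 + x.2.1 + x.2.2) = 2 * x.1 ∨ w + (x.1 + x.2.1 + x.2.2) = 2 * x.2.1 ∨
          w + (x.1 + x.2.1 + x.2.2) = 2 * x.2.2)) ∧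
    (aboveThreshold a b c d w ↔
      {x : R3 | f0 a b c d x = w} =
        (fun y : R3 => (y.1 - w, y.2.1 - w, y.2.2 - w)) ''
          {y : R3 | min (min (2 * y.1) (2 * y.2.1)) (2 * y.2.2) = y.1 + y.2.1 + y.2.2}) := by
  exact ⟨⟨a_to_b a b c d w, b_to_a a b c d w⟩,
    ⟨a_to_c a b c d w, fun hc => b_to_a a b c d w (c_to_b a b c d w hc)⟩⟩
end
end

section
/- Fix w ∈ ℝ and work in the level set {x ∈ ℝ³ : f₀(x) = w}, with cells defined there. Writing (A₁, A₂, A₃) = (A, B, C), so that 𝒞(A₁X₁) = 𝒞(AX₁), 𝒞(A₂X₂) = 𝒞(BX₂), 𝒞(A₃X₃) = 𝒞(CX₃), for each i ∈ {1,2,3} the involution trop(sᵢ) maps 𝒞(AᵢXᵢ) onto itself and maps 𝒞(Xᵢ²) onto the union 𝒞(X_{i+1}²) ∪ 𝒞(X_{i−1}²) ∪ 𝒞(A_{i+1}X_{i+1}) ∪ 𝒞(A_{i−1}X_{i−1}) ∪ 𝒞(D) (indices taken mod 3). -/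
noncomputable section

/-- The tropicalized Vieta involution `trop(s₁)`. -/
def trop1 (a b c d : WithTop ℝ) (x : R3) : R3 :=
  ((min (min ((2 * x.2.1 : ℝ) : WithTop ℝ) ((2 * x.2.2 : ℝ) : WithTop ℝ))
      (min (min (b + (x.2.1 : WithTop ℝ)) (c + (x.2.2 : WithTop ℝ))) d)).untopD 0 - x.1,
    x.2.1, x.2.2)

/-- The tropicalized Vieta involution `trop(s₂)`. -/
def trop2 (a b c d : WithTop ℝ) (x : R3) : R3 :=
  (x.1,
    (min (min ((2 * x.1 : ℝ) : WithTop ℝ) ((2 * x.2.2 : ℝ) : WithTop ℝ))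
      (min (min (a + (x.1 : WithTop ℝ)) (c + (x.2.2 : WithTop ℝ))) d)).untopD 0 - x.2.1,
    x.2.2)

/-- The tropicalized Vieta involution `trop(s₃)`. -/
def trop3 (a b c d : WithTop ℝ) (x : R3) : R3 :=
  (x.1, x.2.1,
    (min (min ((2 * x.1 : ℝ) : WithTop ℝ) ((2 * x.2.1 : ℝ) : WithTop ℝ))
      (min (min (a + (x.1 : WithTop ℝ)) (b + (x.2.1 : WithTop ℝ))) d)).untopD 0 - x.2.2)

/-- The three tropicalized Vieta involutions, indexed by `Fin 3`. -/
def trop (a b c d : WithTop ℝ) : Fin 3 → R3 → R3 :=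
  ![trop1 a b c d, trop2 a b c d, trop3 a b c d]

/-- The `i`-th coordinate of a point of `ℝ³`. -/
def coord : Fin 3 → R3 → ℝ := ![fun x => x.1, fun x => x.2.1, fun x => x.2.2]

/-- The quadratic cell `𝒞(Xᵢ²)` inside the level set `{f₀ = w}`. -/
def cellXw (a b c d : WithTop ℝ) (w : ℝ) (i : Fin 3) : Set R3 :=
  {x | f0 a b c d x = w ∧ w + (x.1 + x.2.1 + x.2.2) = 2 * coord i x}

/-- The cell `𝒞(AX₁)` inside the level set `{f₀ = w}`. -/
def cellAw (a b c d : WithTop ℝ) (w : ℝ) : Set R3 :=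
  {x | f0 a b c d x = w ∧
    ((w + (x.1 + x.2.1 + x.2.2) : ℝ) : WithTop ℝ) = a + (x.1 : WithTop ℝ)}

/-- The cell `𝒞(BX₂)` inside the level set `{f₀ = w}`. -/
def cellBw (a b c d : WithTop ℝ) (w : ℝ) : Set R3 :=
  {x | f0 a b c d x = w ∧
    ((w + (x.1 + x.2.1 + x.2.2) : ℝ) : WithTop ℝ) = b + (x.2.1 : WithTop ℝ)}

/-- The cell `𝒞(CX₃)` inside the level set `{f₀ = w}`. -/
def cellCw (a b c d : WithTop ℝ) (w : ℝ) : Set R3 :=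
  {x | f0 a b c d x = w ∧
    ((w + (x.1 + x.2.1 + x.2.2) : ℝ) : WithTop ℝ) = c + (x.2.2 : WithTop ℝ)}

/-- The cell `𝒞(D)` inside the level set `{f₀ = w}`. -/
def cellDw (a b c d : WithTop ℝ) (w : ℝ) : Set R3 :=
  {x | f0 a b c d x = w ∧ ((w + (x.1 + x.2.1 + x.2.2) : ℝ) : WithTop ℝ) = d}



/-! ### Auxiliary machinery -/

noncomputable def G (u t : ℝ) (p m : WithTop ℝ) : ℝ :=
  (min (min ((2*u : ℝ) : WithTop ℝ) (p + (u : ℝ))) m).untopD 0 - (u + t)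

lemma G_coe (u t q r : ℝ) : G u t (q : WithTop ℝ) (r : WithTop ℝ)
    = min (min (2*u) (q+u)) r - (u+t) := by
  unfold G
  rw [← WithTop.coe_add, ← WithTop.coe_min, ← WithTop.coe_min, WithTop.untopD_coe]

lemma G_top (u t r : ℝ) : G u t ⊤ (r : WithTop ℝ) = min (2*u) r - (u+t) := by
  unfold G
  rw [add_comm, WithTop.add_top, min_eq_left le_top, ← WithTop.coe_min, WithTop.untopD_coe]

lemma keyA (w u t r : ℝ) (p : WithTop ℝ) (h1 : G u t p (r : WithTop ℝ) = w)
    (h2 : ((w + u + t : ℝ) : WithTop ℝ) = p + (u : ℝ)) :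
    G (r-u) t p (r : WithTop ℝ) = w ∧
      ((w + (r-u) + t : ℝ) : WithTop ℝ) = p + ((r-u : ℝ) : WithTop ℝ) := by
  induction p using WithTop.recTopCoe with
  | top => simp [add_comm] at h2
  | coe q =>
    rw [G_coe] at h1
    rw [← WithTop.coe_add, WithTop.coe_inj] at h2
    have h3 : min (min (2*u) (q+u)) r = w + u + t := by linarith
    have h4 : q + u ≤ 2*u := by nlinarith [min_le_left (min (2*u) (q+u)) r, min_le_left (2*u) (q+u), min_le_right (2*u) (q+u), min_le_right (min (2*u) (q+u)) r, h3]
    have h5 : q + u ≤ r := by nlinarith [min_le_right (min (2*u) (q+u)) r]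
    constructor
    · rw [G_coe]
      rw [min_def, min_def]; split_ifs <;> linarith
    · rw [← WithTop.coe_add, WithTop.coe_inj]; linarith

lemma keyX (w u t r : ℝ) (p : WithTop ℝ) (h1 : G u t p (r : WithTop ℝ) = w)
    (h2 : w + u + t = 2*u) :
    G (r-u) t p (r : WithTop ℝ) = w ∧ w + (r-u) + t = r := by
  induction p using WithTop.recTopCoe with
  | top =>
    rw [G_top] at h1
    have h3 : min (2*u) r = w + u + t := by linarith
    have h4 : 2*u ≤ r := by nlinarith [min_le_right (2*u) r]
    constructor
    · rw [G_top, min_def]; split_ifs <;> linarith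
    · linarith
  | coe q =>
    rw [G_coe] at h1
    have h3 : min (min (2*u) (q+u)) r = w + u + t := by linarith
    have h4 : 2*u ≤ q + u := by nlinarith [min_le_left (min (2*u) (q+u)) r, min_le_right (2*u) (q+u)]
    have h5 : 2*u ≤ r := by nlinarith [min_le_right (min (2*u) (q+u)) r]
    constructor
    · rw [G_coe, min_def, min_def]; split_ifs <;> linarith
    · linarith

lemma keyY (w u t r : ℝ) (p : WithTop ℝ) (h1 : G u t p (r : WithTop ℝ) = w)
    (h2 : w + u + t = r) :
    G (r-u) t p (r : WithTop ℝ) = w ∧ w + (r-u) + t = 2*(r-u) := by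
  induction p using WithTop.recTopCoe with
  | top =>
    rw [G_top] at h1
    have h3 : min (2*u) r = w + u + t := by linarith
    have h4 : r ≤ 2*u := by nlinarith [min_le_left (2*u) r]
    constructor
    · rw [G_top, min_def]; split_ifs <;> linarith
    · linarith
  | coe q =>
    rw [G_coe] at h1
    have h3 : min (min (2*u) (q+u)) r = w + u + t := by linarith
    have h4 : r ≤ 2*u := by nlinarith [min_le_left (min (2*u) (q+u)) r, min_le_left (2*u) (q+u)]
    have h5 : r ≤ q + u := by nlinarith [min_le_left (min (2*u) (q+u)) r, min_le_right (2*u) (q+u)]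
    constructor
    · rw [G_coe, min_def, min_def]; split_ifs <;> linarith
    · linarith

lemma image_invol {f : R3 → R3} (hf : ∀ x, f (f x) = x) {S T : Set R3}
    (h1 : ∀ x ∈ S, f x ∈ T) (h2 : ∀ x ∈ T, f x ∈ S) : f '' S = T := by
  apply Set.Subset.antisymm
  · rintro _ ⟨x, hx, rfl⟩; exact h1 x hx
  · intro y hy; exact ⟨f y, h2 y hy, hf y⟩

lemma min5 {α : Type*} [LinearOrder α] (A B C D E : α) :
    min (min A B) (min (min C D) E) = A ∨ min (min A B) (min (min C D) E) = B ∨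
    min (min A B) (min (min C D) E) = C ∨ min (min A B) (min (min C D) E) = D ∨
    min (min A B) (min (min C D) E) = E := by
  simp only [min_def]; split_ifs <;> tauto

lemma untop'_le {X : WithTop ℝ} {r : ℝ} (h : X ≤ (r : WithTop ℝ)) : X.untopD 0 ≤ r := by
  lift X to ℝ using (h.trans_lt (WithTop.coe_lt_top r)).ne
  rw [WithTop.untopD_coe]
  exact_mod_cast h

/-! ### Block 1 -/

def M1 (b c d : WithTop ℝ) (x : R3) : WithTop ℝ :=
  min (min ((2 * x.2.1 : ℝ) : WithTop ℝ) ((2 * x.2.2 : ℝ) : WithTop ℝ))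
      (min (min (b + (x.2.1 : WithTop ℝ)) (c + (x.2.2 : WithTop ℝ))) d)

lemma tmin_eq1 (a b c d : WithTop ℝ) (x : R3) :
    tmin a b c d x
      = min (min ((2*x.1 : ℝ) : WithTop ℝ) (a + (x.1 : WithTop ℝ))) (M1 b c d x) := by
  unfold tmin M1
  apply le_antisymm <;> simp only [le_min_iff, min_le_iff, le_refl, true_or, or_true,
    true_and, and_true] <;> tauto

lemma M1_exists (b c d : WithTop ℝ) (x : R3) : ∃ r : ℝ, M1 b c d x = (r : WithTop ℝ) := by
  have hle : M1 b c d x ≤ ((2*x.2.1 : ℝ) : WithTop ℝ) := (min_le_left _ _).trans (min_le_left _ _)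
  obtain ⟨r, hr⟩ := WithTop.ne_top_iff_exists.mp (hle.trans_lt (WithTop.coe_lt_top _)).ne
  exact ⟨r, hr.symm⟩

lemma f0_eq_G1 (a b c d : WithTop ℝ) (u v z : ℝ) :
    f0 a b c d (u, v, z) = G u (v + z) a (M1 b c d (u, v, z)) := by
  unfold f0 G
  rw [tmin_eq1]
  ring_nf

lemma M1_indep (b c d : WithTop ℝ) (u v z uu : ℝ) :
    M1 b c d (uu, v, z) = M1 b c d (u, v, z) := rfl

lemma trop1_eq (a b c d : WithTop ℝ) (u v z r : ℝ)
    (hr : M1 b c d (u, v, z) = (r : WithTop ℝ)) :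
    trop1 a b c d (u, v, z) = (r - u, v, z) := by
  unfold trop1
  rw [show (min (min ((2 * v : ℝ) : WithTop ℝ) ((2 * z : ℝ) : WithTop ℝ))
      (min (min (b + ((v : ℝ) : WithTop ℝ)) (c + ((z : ℝ) : WithTop ℝ))) d))
      = M1 b c d (u, v, z) from rfl, hr, WithTop.untopD_coe]

lemma trop1_invol (a b c d : WithTop ℝ) (x : R3) : trop1 a b c d (trop1 a b c d x) = x := by
  obtain ⟨u, v, z⟩ := x
  obtain ⟨r, hr⟩ := M1_exists b c d (u, v, z)
  rw [trop1_eq a b c d u v z r hr,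
    trop1_eq a b c d (r - u) v z r ((M1_indep b c d u v z (r - u)).trans hr)]
  simp

lemma mapsA1 (a b c d : WithTop ℝ) (w : ℝ) :
    ∀ x ∈ cellAw a b c d w, trop1 a b c d x ∈ cellAw a b c d w := by
  rintro ⟨u, v, z⟩ ⟨hf, hc⟩
  obtain ⟨r, hr⟩ := M1_exists b c d (u, v, z)
  rw [f0_eq_G1, hr] at hf
  have hc2 : ((w + u + (v + z) : ℝ) : WithTop ℝ) = a + ((u : ℝ) : WithTop ℝ) := by
    rw [show (w + u + (v + z) : ℝ) = w + (u + v + z) from by ring]; exact hc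
  obtain ⟨h1, h2⟩ := keyA w u (v + z) r a hf hc2
  rw [trop1_eq a b c d u v z r hr]
  refine ⟨?_, ?_⟩
  · rw [f0_eq_G1, M1_indep b c d u v z (r - u), hr]; exact h1
  · show ((w + ((r - u) + v + z) : ℝ) : WithTop ℝ) = a + (((r - u : ℝ)) : WithTop ℝ)
    rw [show (w + ((r - u) + v + z) : ℝ) = w + (r - u) + (v + z) from by ring]
    exact h2

lemma mapsX1 (a b c d : WithTop ℝ) (w : ℝ) :
    ∀ x ∈ cellXw a b c d w 0, trop1 a b c d x ∈
      cellXw a b c d w 1 ∪ cellXw a b c d w 2 ∪ cellBw a b c d w ∪ cellCw a b c d w ∪ cellDw a b c d w := by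
  rintro ⟨u, v, z⟩ ⟨hf, hc⟩
  obtain ⟨r, hr⟩ := M1_exists b c d (u, v, z)
  rw [f0_eq_G1, hr] at hf
  have hc2 : w + (u + v + z) = 2 * u := hc
  obtain ⟨h1, h2⟩ := keyX w u (v + z) r a hf (by linarith)
  have hf2 : f0 a b c d (r - u, v, z) = w := by
    rw [f0_eq_G1, M1_indep b c d u v z (r - u), hr]; exact h1
  have hs2 : ((w + ((r - u) + v + z) : ℝ) : WithTop ℝ) = M1 b c d (u, v, z) := by
    rw [hr, show (w + ((r - u) + v + z) : ℝ) = w + (r - u) + (v + z) from by ring,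
      WithTop.coe_inj.mpr h2]
  have h5 := min5 ((2*v : ℝ) : WithTop ℝ) ((2*z : ℝ) : WithTop ℝ)
    (b + ((v : ℝ) : WithTop ℝ)) (c + ((z : ℝ) : WithTop ℝ)) d
  rw [show (min (min ((2*v : ℝ) : WithTop ℝ) ((2*z : ℝ) : WithTop ℝ))
      (min (min (b + ((v : ℝ) : WithTop ℝ)) (c + ((z : ℝ) : WithTop ℝ))) d))
      = M1 b c d (u, v, z) from rfl] at h5
  rw [trop1_eq a b c d u v z r hr]
  simp only [Set.mem_union]
  rcases h5 with h|h|h|h|h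
  · refine Or.inl (Or.inl (Or.inl (Or.inl ⟨hf2, ?_⟩)))
    show w + ((r - u) + v + z) = 2 * v
    exact_mod_cast hs2.trans h
  · refine Or.inl (Or.inl (Or.inl (Or.inr ⟨hf2, ?_⟩)))
    show w + ((r - u) + v + z) = 2 * z
    exact_mod_cast hs2.trans h
  · exact Or.inl (Or.inl (Or.inr ⟨hf2, hs2.trans h⟩))
  · exact Or.inl (Or.inr ⟨hf2, hs2.trans h⟩)
  · exact Or.inr ⟨hf2, hs2.trans h⟩

lemma mapsU1 (a b c d : WithTop ℝ) (w : ℝ) :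
    ∀ x ∈ cellXw a b c d w 1 ∪ cellXw a b c d w 2 ∪ cellBw a b c d w ∪ cellCw a b c d w ∪ cellDw a b c d w,
      trop1 a b c d x ∈ cellXw a b c d w 0 := by
  rintro ⟨u, v, z⟩ hx
  obtain ⟨r, hr⟩ := M1_exists b c d (u, v, z)
  simp only [Set.mem_union] at hx
  have hkey : f0 a b c d (u, v, z) = w ∧
      (r : WithTop ℝ) ≤ ((w + (u + v + z) : ℝ) : WithTop ℝ) := by
    rcases hx with (((⟨hf, hc⟩|⟨hf, hc⟩)|⟨hf, hc⟩)|⟨hf, hc⟩)|⟨hf, hc⟩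
    · refine ⟨hf, ?_⟩
      have hc2 : w + (u + v + z) = 2 * v := hc
      rw [hc2, ← hr]
      exact (min_le_left _ _).trans (min_le_left _ _)
    · refine ⟨hf, ?_⟩
      have hc2 : w + (u + v + z) = 2 * z := hc
      rw [hc2, ← hr]
      exact (min_le_left _ _).trans (min_le_right _ _)
    · refine ⟨hf, ?_⟩
      have hc2 : ((w + (u + v + z) : ℝ) : WithTop ℝ) = b + ((v : ℝ) : WithTop ℝ) := hc
      rw [hc2, ← hr]
      exact (min_le_right _ _).trans ((min_le_left _ _).trans (min_le_left _ _))
    · refine ⟨hf, ?_⟩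
      have hc2 : ((w + (u + v + z) : ℝ) : WithTop ℝ) = c + ((z : ℝ) : WithTop ℝ) := hc
      rw [hc2, ← hr]
      exact (min_le_right _ _).trans ((min_le_left _ _).trans (min_le_right _ _))
    · refine ⟨hf, ?_⟩
      have hc2 : ((w + (u + v + z) : ℝ) : WithTop ℝ) = d := hc
      rw [hc2, ← hr]
      exact (min_le_right _ _).trans (min_le_right _ _)
  obtain ⟨hf, hrs⟩ := hkey
  rw [f0_eq_G1, hr] at hf
  have hsr : w + u + (v + z) ≤ r := by
    have h := untop'_le
      (X := min (min ((2*u : ℝ) : WithTop ℝ) (a + ((u : ℝ) : WithTop ℝ))) ((r : ℝ) : WithTop ℝ))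
      (min_le_right _ _)
    unfold G at hf
    linarith
  have hrle : r ≤ w + u + (v + z) := by
    have h := WithTop.coe_le_coe.mp hrs
    linarith
  obtain ⟨h1, h2⟩ := keyY w u (v + z) r a hf (le_antisymm hsr hrle)
  rw [trop1_eq a b c d u v z r hr]
  refine ⟨?_, ?_⟩
  · rw [f0_eq_G1, M1_indep b c d u v z (r - u), hr]; exact h1
  · show w + ((r - u) + v + z) = 2 * (r - u)
    linarith [h2]

/-! ### Block 2 -/

def M2 (a c d : WithTop ℝ) (x : R3) : WithTop ℝ :=
  min (min ((2 * x.1 : ℝ) : WithTop ℝ) ((2 * x.2.2 : ℝ) : WithTop ℝ))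
      (min (min (a + (x.1 : WithTop ℝ)) (c + (x.2.2 : WithTop ℝ))) d)

lemma tmin_eq2 (a b c d : WithTop ℝ) (x : R3) :
    tmin a b c d x
      = min (min ((2*x.2.1 : ℝ) : WithTop ℝ) (b + (x.2.1 : WithTop ℝ))) (M2 a c d x) := by
  unfold tmin M2
  apply le_antisymm <;> simp only [le_min_iff, min_le_iff, le_refl, true_or, or_true,
    true_and, and_true] <;> tauto

lemma M2_exists (a c d : WithTop ℝ) (x : R3) : ∃ r : ℝ, M2 a c d x = (r : WithTop ℝ) := by
  have hle : M2 a c d x ≤ ((2*x.1 : ℝ) : WithTop ℝ) := (min_le_left _ _).trans (min_le_left _ _)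
  obtain ⟨r, hr⟩ := WithTop.ne_top_iff_exists.mp (hle.trans_lt (WithTop.coe_lt_top _)).ne
  exact ⟨r, hr.symm⟩

lemma f0_eq_G2 (a b c d : WithTop ℝ) (u v z : ℝ) :
    f0 a b c d (u, v, z) = G v (u + z) b (M2 a c d (u, v, z)) := by
  unfold f0 G
  rw [tmin_eq2]
  ring_nf

lemma M2_indep (a c d : WithTop ℝ) (u v z uu : ℝ) :
    M2 a c d (u, uu, z) = M2 a c d (u, v, z) := rfl

lemma trop2_eq (a b c d : WithTop ℝ) (u v z r : ℝ)
    (hr : M2 a c d (u, v, z) = (r : WithTop ℝ)) :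
    trop2 a b c d (u, v, z) = (u, r - v, z) := by
  unfold trop2
  rw [show (min (min ((2 * u : ℝ) : WithTop ℝ) ((2 * z : ℝ) : WithTop ℝ))
      (min (min (a + ((u : ℝ) : WithTop ℝ)) (c + ((z : ℝ) : WithTop ℝ))) d))
      = M2 a c d (u, v, z) from rfl, hr, WithTop.untopD_coe]

lemma trop2_invol (a b c d : WithTop ℝ) (x : R3) : trop2 a b c d (trop2 a b c d x) = x := by
  obtain ⟨u, v, z⟩ := x
  obtain ⟨r, hr⟩ := M2_exists a c d (u, v, z)
  rw [trop2_eq a b c d u v z r hr,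
    trop2_eq a b c d u (r - v) z r ((M2_indep a c d u v z (r - v)).trans hr)]
  simp

lemma mapsA2 (a b c d : WithTop ℝ) (w : ℝ) :
    ∀ x ∈ cellBw a b c d w, trop2 a b c d x ∈ cellBw a b c d w := by
  rintro ⟨u, v, z⟩ ⟨hf, hc⟩
  obtain ⟨r, hr⟩ := M2_exists a c d (u, v, z)
  rw [f0_eq_G2, hr] at hf
  have hc2 : ((w + v + (u + z) : ℝ) : WithTop ℝ) = b + ((v : ℝ) : WithTop ℝ) := by
    rw [show (w + v + (u + z) : ℝ) = w + (u + v + z) from by ring]; exact hc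
  obtain ⟨h1, h2⟩ := keyA w v (u + z) r b hf hc2
  rw [trop2_eq a b c d u v z r hr]
  refine ⟨?_, ?_⟩
  · rw [f0_eq_G2, M2_indep a c d u v z (r - v), hr]; exact h1
  · show ((w + (u + (r - v) + z) : ℝ) : WithTop ℝ) = b + (((r - v : ℝ)) : WithTop ℝ)
    rw [show (w + (u + (r - v) + z) : ℝ) = w + (r - v) + (u + z) from by ring]
    exact h2

lemma mapsX2 (a b c d : WithTop ℝ) (w : ℝ) :
    ∀ x ∈ cellXw a b c d w 1, trop2 a b c d x ∈
      cellXw a b c d w 0 ∪ cellXw a b c d w 2 ∪ cellAw a b c d w ∪ cellCw a b c d w ∪ cellDw a b c d w := by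
  rintro ⟨u, v, z⟩ ⟨hf, hc⟩
  obtain ⟨r, hr⟩ := M2_exists a c d (u, v, z)
  rw [f0_eq_G2, hr] at hf
  have hc2 : w + (u + v + z) = 2 * v := hc
  obtain ⟨h1, h2⟩ := keyX w v (u + z) r b hf (by linarith)
  have hf2 : f0 a b c d (u, r - v, z) = w := by
    rw [f0_eq_G2, M2_indep a c d u v z (r - v), hr]; exact h1
  have hs2 : ((w + (u + (r - v) + z) : ℝ) : WithTop ℝ) = M2 a c d (u, v, z) := by
    rw [hr, show (w + (u + (r - v) + z) : ℝ) = w + (r - v) + (u + z) from by ring,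
      WithTop.coe_inj.mpr h2]
  have h5 := min5 ((2*u : ℝ) : WithTop ℝ) ((2*z : ℝ) : WithTop ℝ)
    (a + ((u : ℝ) : WithTop ℝ)) (c + ((z : ℝ) : WithTop ℝ)) d
  rw [show (min (min ((2*u : ℝ) : WithTop ℝ) ((2*z : ℝ) : WithTop ℝ))
      (min (min (a + ((u : ℝ) : WithTop ℝ)) (c + ((z : ℝ) : WithTop ℝ))) d))
      = M2 a c d (u, v, z) from rfl] at h5
  rw [trop2_eq a b c d u v z r hr]
  simp only [Set.mem_union]
  rcases h5 with h|h|h|h|h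
  · refine Or.inl (Or.inl (Or.inl (Or.inl ⟨hf2, ?_⟩)))
    show w + (u + (r - v) + z) = 2 * u
    exact_mod_cast hs2.trans h
  · refine Or.inl (Or.inl (Or.inl (Or.inr ⟨hf2, ?_⟩)))
    show w + (u + (r - v) + z) = 2 * z
    exact_mod_cast hs2.trans h
  · exact Or.inl (Or.inl (Or.inr ⟨hf2, hs2.trans h⟩))
  · exact Or.inl (Or.inr ⟨hf2, hs2.trans h⟩)
  · exact Or.inr ⟨hf2, hs2.trans h⟩

lemma mapsU2 (a b c d : WithTop ℝ) (w : ℝ) :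
    ∀ x ∈ cellXw a b c d w 0 ∪ cellXw a b c d w 2 ∪ cellAw a b c d w ∪ cellCw a b c d w ∪ cellDw a b c d w,
      trop2 a b c d x ∈ cellXw a b c d w 1 := by
  rintro ⟨u, v, z⟩ hx
  obtain ⟨r, hr⟩ := M2_exists a c d (u, v, z)
  simp only [Set.mem_union] at hx
  have hkey : f0 a b c d (u, v, z) = w ∧
      (r : WithTop ℝ) ≤ ((w + (u + v + z) : ℝ) : WithTop ℝ) := by
    rcases hx with (((⟨hf, hc⟩|⟨hf, hc⟩)|⟨hf, hc⟩)|⟨hf, hc⟩)|⟨hf, hc⟩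
    · refine ⟨hf, ?_⟩
      have hc2 : w + (u + v + z) = 2 * u := hc
      rw [hc2, ← hr]
      exact (min_le_left _ _).trans (min_le_left _ _)
    · refine ⟨hf, ?_⟩
      have hc2 : w + (u + v + z) = 2 * z := hc
      rw [hc2, ← hr]
      exact (min_le_left _ _).trans (min_le_right _ _)
    · refine ⟨hf, ?_⟩
      have hc2 : ((w + (u + v + z) : ℝ) : WithTop ℝ) = a + ((u : ℝ) : WithTop ℝ) := hc
      rw [hc2, ← hr]
      exact (min_le_right _ _).trans ((min_le_left _ _).trans (min_le_left _ _))
    · refine ⟨hf, ?_⟩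
      have hc2 : ((w + (u + v + z) : ℝ) : WithTop ℝ) = c + ((z : ℝ) : WithTop ℝ) := hc
      rw [hc2, ← hr]
      exact (min_le_right _ _).trans ((min_le_left _ _).trans (min_le_right _ _))
    · refine ⟨hf, ?_⟩
      have hc2 : ((w + (u + v + z) : ℝ) : WithTop ℝ) = d := hc
      rw [hc2, ← hr]
      exact (min_le_right _ _).trans (min_le_right _ _)
  obtain ⟨hf, hrs⟩ := hkey
  rw [f0_eq_G2, hr] at hf
  have hsr : w + v + (u + z) ≤ r := by
    have h := untop'_le
      (X := min (min ((2*v : ℝ) : WithTop ℝ) (b + ((v : ℝ) : WithTop ℝ))) ((r : ℝ) : WithTop ℝ))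
      (min_le_right _ _)
    unfold G at hf
    linarith
  have hrle : r ≤ w + v + (u + z) := by
    have h := WithTop.coe_le_coe.mp hrs
    linarith
  obtain ⟨h1, h2⟩ := keyY w v (u + z) r b hf (le_antisymm hsr hrle)
  rw [trop2_eq a b c d u v z r hr]
  refine ⟨?_, ?_⟩
  · rw [f0_eq_G2, M2_indep a c d u v z (r - v), hr]; exact h1
  · show w + (u + (r - v) + z) = 2 * (r - v)
    linarith [h2]

/-! ### Block 3 -/

def M3 (a b d : WithTop ℝ) (x : R3) : WithTop ℝ :=
  min (min ((2 * x.1 : ℝ) : WithTop ℝ) ((2 * x.2.1 : ℝ) : WithTop ℝ))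
      (min (min (a + (x.1 : WithTop ℝ)) (b + (x.2.1 : WithTop ℝ))) d)

lemma tmin_eq3 (a b c d : WithTop ℝ) (x : R3) :
    tmin a b c d x
      = min (min ((2*x.2.2 : ℝ) : WithTop ℝ) (c + (x.2.2 : WithTop ℝ))) (M3 a b d x) := by
  unfold tmin M3
  apply le_antisymm <;> simp only [le_min_iff, min_le_iff, le_refl, true_or, or_true,
    true_and, and_true] <;> tauto

lemma M3_exists (a b d : WithTop ℝ) (x : R3) : ∃ r : ℝ, M3 a b d x = (r : WithTop ℝ) := by
  have hle : M3 a b d x ≤ ((2*x.1 : ℝ) : WithTop ℝ) := (min_le_left _ _).trans (min_le_left _ _)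
  obtain ⟨r, hr⟩ := WithTop.ne_top_iff_exists.mp (hle.trans_lt (WithTop.coe_lt_top _)).ne
  exact ⟨r, hr.symm⟩

lemma f0_eq_G3 (a b c d : WithTop ℝ) (u v z : ℝ) :
    f0 a b c d (u, v, z) = G z (u + v) c (M3 a b d (u, v, z)) := by
  unfold f0 G
  rw [tmin_eq3]
  ring_nf

lemma M3_indep (a b d : WithTop ℝ) (u v z uu : ℝ) :
    M3 a b d (u, v, uu) = M3 a b d (u, v, z) := rfl

lemma trop3_eq (a b c d : WithTop ℝ) (u v z r : ℝ)
    (hr : M3 a b d (u, v, z) = (r : WithTop ℝ)) :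
    trop3 a b c d (u, v, z) = (u, v, r - z) := by
  unfold trop3
  rw [show (min (min ((2 * u : ℝ) : WithTop ℝ) ((2 * v : ℝ) : WithTop ℝ))
      (min (min (a + ((u : ℝ) : WithTop ℝ)) (b + ((v : ℝ) : WithTop ℝ))) d))
      = M3 a b d (u, v, z) from rfl, hr, WithTop.untopD_coe]

lemma trop3_invol (a b c d : WithTop ℝ) (x : R3) : trop3 a b c d (trop3 a b c d x) = x := by
  obtain ⟨u, v, z⟩ := x
  obtain ⟨r, hr⟩ := M3_exists a b d (u, v, z)
  rw [trop3_eq a b c d u v z r hr,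
    trop3_eq a b c d u v (r - z) r ((M3_indep a b d u v z (r - z)).trans hr)]
  simp

lemma mapsA3 (a b c d : WithTop ℝ) (w : ℝ) :
    ∀ x ∈ cellCw a b c d w, trop3 a b c d x ∈ cellCw a b c d w := by
  rintro ⟨u, v, z⟩ ⟨hf, hc⟩
  obtain ⟨r, hr⟩ := M3_exists a b d (u, v, z)
  rw [f0_eq_G3, hr] at hf
  have hc2 : ((w + z + (u + v) : ℝ) : WithTop ℝ) = c + ((z : ℝ) : WithTop ℝ) := by
    rw [show (w + z + (u + v) : ℝ) = w + (u + v + z) from by ring]; exact hc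
  obtain ⟨h1, h2⟩ := keyA w z (u + v) r c hf hc2
  rw [trop3_eq a b c d u v z r hr]
  refine ⟨?_, ?_⟩
  · rw [f0_eq_G3, M3_indep a b d u v z (r - z), hr]; exact h1
  · show ((w + (u + v + (r - z)) : ℝ) : WithTop ℝ) = c + (((r - z : ℝ)) : WithTop ℝ)
    rw [show (w + (u + v + (r - z)) : ℝ) = w + (r - z) + (u + v) from by ring]
    exact h2

lemma mapsX3 (a b c d : WithTop ℝ) (w : ℝ) :
    ∀ x ∈ cellXw a b c d w 2, trop3 a b c d x ∈
      cellXw a b c d w 0 ∪ cellXw a b c d w 1 ∪ cellAw a b c d w ∪ cellBw a b c d w ∪ cellDw a b c d w := by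
  rintro ⟨u, v, z⟩ ⟨hf, hc⟩
  obtain ⟨r, hr⟩ := M3_exists a b d (u, v, z)
  rw [f0_eq_G3, hr] at hf
  have hc2 : w + (u + v + z) = 2 * z := hc
  obtain ⟨h1, h2⟩ := keyX w z (u + v) r c hf (by linarith)
  have hf2 : f0 a b c d (u, v, r - z) = w := by
    rw [f0_eq_G3, M3_indep a b d u v z (r - z), hr]; exact h1
  have hs2 : ((w + (u + v + (r - z)) : ℝ) : WithTop ℝ) = M3 a b d (u, v, z) := by
    rw [hr, show (w + (u + v + (r - z)) : ℝ) = w + (r - z) + (u + v) from by ring,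
      WithTop.coe_inj.mpr h2]
  have h5 := min5 ((2*u : ℝ) : WithTop ℝ) ((2*v : ℝ) : WithTop ℝ)
    (a + ((u : ℝ) : WithTop ℝ)) (b + ((v : ℝ) : WithTop ℝ)) d
  rw [show (min (min ((2*u : ℝ) : WithTop ℝ) ((2*v : ℝ) : WithTop ℝ))
      (min (min (a + ((u : ℝ) : WithTop ℝ)) (b + ((v : ℝ) : WithTop ℝ))) d))
      = M3 a b d (u, v, z) from rfl] at h5
  rw [trop3_eq a b c d u v z r hr]
  simp only [Set.mem_union]
  rcases h5 with h|h|h|h|h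
  · refine Or.inl (Or.inl (Or.inl (Or.inl ⟨hf2, ?_⟩)))
    show w + (u + v + (r - z)) = 2 * u
    exact_mod_cast hs2.trans h
  · refine Or.inl (Or.inl (Or.inl (Or.inr ⟨hf2, ?_⟩)))
    show w + (u + v + (r - z)) = 2 * v
    exact_mod_cast hs2.trans h
  · exact Or.inl (Or.inl (Or.inr ⟨hf2, hs2.trans h⟩))
  · exact Or.inl (Or.inr ⟨hf2, hs2.trans h⟩)
  · exact Or.inr ⟨hf2, hs2.trans h⟩

lemma mapsU3 (a b c d : WithTop ℝ) (w : ℝ) :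
    ∀ x ∈ cellXw a b c d w 0 ∪ cellXw a b c d w 1 ∪ cellAw a b c d w ∪ cellBw a b c d w ∪ cellDw a b c d w,
      trop3 a b c d x ∈ cellXw a b c d w 2 := by
  rintro ⟨u, v, z⟩ hx
  obtain ⟨r, hr⟩ := M3_exists a b d (u, v, z)
  simp only [Set.mem_union] at hx
  have hkey : f0 a b c d (u, v, z) = w ∧
      (r : WithTop ℝ) ≤ ((w + (u + v + z) : ℝ) : WithTop ℝ) := by
    rcases hx with (((⟨hf, hc⟩|⟨hf, hc⟩)|⟨hf, hc⟩)|⟨hf, hc⟩)|⟨hf, hc⟩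
    · refine ⟨hf, ?_⟩
      have hc2 : w + (u + v + z) = 2 * u := hc
      rw [hc2, ← hr]
      exact (min_le_left _ _).trans (min_le_left _ _)
    · refine ⟨hf, ?_⟩
      have hc2 : w + (u + v + z) = 2 * v := hc
      rw [hc2, ← hr]
      exact (min_le_left _ _).trans (min_le_right _ _)
    · refine ⟨hf, ?_⟩
      have hc2 : ((w + (u + v + z) : ℝ) : WithTop ℝ) = a + ((u : ℝ) : WithTop ℝ) := hc
      rw [hc2, ← hr]
      exact (min_le_right _ _).trans ((min_le_left _ _).trans (min_le_left _ _))
    · refine ⟨hf, ?_⟩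
      have hc2 : ((w + (u + v + z) : ℝ) : WithTop ℝ) = b + ((v : ℝ) : WithTop ℝ) := hc
      rw [hc2, ← hr]
      exact (min_le_right _ _).trans ((min_le_left _ _).trans (min_le_right _ _))
    · refine ⟨hf, ?_⟩
      have hc2 : ((w + (u + v + z) : ℝ) : WithTop ℝ) = d := hc
      rw [hc2, ← hr]
      exact (min_le_right _ _).trans (min_le_right _ _)
  obtain ⟨hf, hrs⟩ := hkey
  rw [f0_eq_G3, hr] at hf
  have hsr : w + z + (u + v) ≤ r := by
    have h := untop'_le
      (X := min (min ((2*z : ℝ) : WithTop ℝ) (c + ((z : ℝ) : WithTop ℝ))) ((r : ℝ) : WithTop ℝ))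
      (min_le_right _ _)
    unfold G at hf
    linarith
  have hrle : r ≤ w + z + (u + v) := by
    have h := WithTop.coe_le_coe.mp hrs
    linarith
  obtain ⟨h1, h2⟩ := keyY w z (u + v) r c hf (le_antisymm hsr hrle)
  rw [trop3_eq a b c d u v z r hr]
  refine ⟨?_, ?_⟩
  · rw [f0_eq_G3, M3_indep a b d u v z (r - z), hr]; exact h1
  · show w + (u + v + (r - z)) = 2 * (r - z)
    linarith [h2]

theorem statement7 (a b c d : WithTop ℝ) (w : ℝ) :
    (trop1 a b c d '' cellAw a b c d w = cellAw a b c d w ∧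
      trop1 a b c d '' cellXw a b c d w 0 =
        cellXw a b c d w 1 ∪ cellXw a b c d w 2 ∪ cellBw a b c d w ∪ cellCw a b c d w ∪
          cellDw a b c d w) ∧
    (trop2 a b c d '' cellBw a b c d w = cellBw a b c d w ∧
      trop2 a b c d '' cellXw a b c d w 1 =
        cellXw a b c d w 2 ∪ cellXw a b c d w 0 ∪ cellCw a b c d w ∪ cellAw a b c d w ∪
          cellDw a b c d w) ∧
    (trop3 a b c d '' cellCw a b c d w = cellCw a b c d w ∧
      trop3 a b c d '' cellXw a b c d w 2 =
        cellXw a b c d w 0 ∪ cellXw a b c d w 1 ∪ cellAw a b c d w ∪ cellBw a b c d w ∪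
          cellDw a b c d w) := by
  refine ⟨⟨?_, ?_⟩, ⟨?_, ?_⟩, ?_, ?_⟩
  · exact image_invol (trop1_invol a b c d) (mapsA1 a b c d w) (mapsA1 a b c d w)
  · exact image_invol (trop1_invol a b c d) (mapsX1 a b c d w) (mapsU1 a b c d w)
  · exact image_invol (trop2_invol a b c d) (mapsA2 a b c d w) (mapsA2 a b c d w)
  · rw [show cellXw a b c d w 2 ∪ cellXw a b c d w 0 ∪ cellCw a b c d w ∪ cellAw a b c d w ∪
        cellDw a b c d w
        = cellXw a b c d w 0 ∪ cellXw a b c d w 2 ∪ cellAw a b c d w ∪ cellCw a b c d w ∪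
        cellDw a b c d w from by ext x; simp only [Set.mem_union]; tauto]
    exact image_invol (trop2_invol a b c d) (mapsX2 a b c d w) (mapsU2 a b c d w)
  · exact image_invol (trop3_invol a b c d) (mapsA3 a b c d w) (mapsA3 a b c d w)
  · exact image_invol (trop3_invol a b c d) (mapsX3 a b c d w) (mapsU3 a b c d w)
end
end

section
/- Let x ∈ Sk(a,b,c,d) and suppose x ∈ 𝒞(Xᵢ²) for some i ∈ {1,2,3}. Then: (i) |x₁|+|x₂|+|x₃| = 2(u^i₁(x) + u^i₂(x)); (ii) if in addition trop(sᵢ)(x) ∈ 𝒞(X_{i+1}²) ∪ 𝒞(X_{i−1}²) (indices mod 3), then, writing y = trop(sᵢ)(x), one has |y₁|+|y₂|+|y₃| ≤ |x₁|+|x₂|+|x₃|. -/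
noncomputable section

/-- The quadratic cell `𝒞(Xᵢ²)` of the skeleton. -/
def cellX (a b c d : WithTop ℝ) (i : Fin 3) : Set R3 :=
  {x ∈ Sk a b c d | x.1 + x.2.1 + x.2.2 = 2 * coord i x}

/-- The special coordinates `u^i(x) = (x_{i+1} − x_i, x_{i−1} − x_i)` (indices mod 3). -/
def uco : Fin 3 → R3 → ℝ × ℝ :=
  ![fun x => (x.2.1 - x.1, x.2.2 - x.1),
    fun x => (x.2.2 - x.2.1, x.1 - x.2.1),
    fun x => (x.1 - x.2.2, x.2.1 - x.2.2)]


lemma sk_data (a b c d : WithTop ℝ) (x : R3) (hx : x ∈ Sk a b c d) :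
    tmin a b c d x = ((x.1 + x.2.1 + x.2.2 : ℝ) : WithTop ℝ) ∧
    x.1 + x.2.1 + x.2.2 ≤ 2 * x.1 ∧ x.1 + x.2.1 + x.2.2 ≤ 2 * x.2.1 ∧
    x.1 + x.2.1 + x.2.2 ≤ 2 * x.2.2 := by
  have hle : tmin a b c d x ≤ ((2 * x.1 : ℝ) : WithTop ℝ) :=
    le_trans (min_le_left _ _) (le_trans (min_le_left _ _) (min_le_left _ _))
  have hne : tmin a b c d x ≠ ⊤ := ne_top_of_le_ne_top WithTop.coe_ne_top hle
  obtain ⟨r, hr⟩ := WithTop.ne_top_iff_exists.mp hne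
  have hrv : r = x.1 + x.2.1 + x.2.2 := by
    have h := hx
    simp only [Sk, f0, Set.mem_setOf_eq, sub_eq_zero, ← hr, WithTop.untopD_coe] at h
    exact h
  have heq : tmin a b c d x = ((x.1 + x.2.1 + x.2.2 : ℝ) : WithTop ℝ) := by
    rw [← hr, hrv]
  refine ⟨heq, ?_, ?_, ?_⟩
  · exact_mod_cast heq ▸ hle
  · have : tmin a b c d x ≤ ((2 * x.2.1 : ℝ) : WithTop ℝ) :=
      le_trans (min_le_left _ _) (le_trans (min_le_left _ _) (min_le_right _ _))
    exact_mod_cast heq ▸ this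
  · have : tmin a b c d x ≤ ((2 * x.2.2 : ℝ) : WithTop ℝ) :=
      le_trans (min_le_left _ _) (le_trans (min_le_right _ _) (min_le_left _ _))
    exact_mod_cast heq ▸ this

lemma sk_nonpos (a b c d : WithTop ℝ) (x : R3) (hx : x ∈ Sk a b c d) :
    x.1 ≤ 0 ∧ x.2.1 ≤ 0 ∧ x.2.2 ≤ 0 := by
  obtain ⟨-, h1, h2, h3⟩ := sk_data a b c d x hx
  exact ⟨by linarith, by linarith, by linarith⟩

theorem statement9 (a b c d : WithTop ℝ) (x : R3) (i : Fin 3)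
    (hx : x ∈ Sk a b c d) (hxi : x ∈ cellX a b c d i) :
    |x.1| + |x.2.1| + |x.2.2| = 2 * ((uco i x).1 + (uco i x).2) ∧
    (trop a b c d i x ∈ cellX a b c d (i + 1) ∪ cellX a b c d (i - 1) →
      |(trop a b c d i x).1| + |(trop a b c d i x).2.1| + |(trop a b c d i x).2.2| ≤
        |x.1| + |x.2.1| + |x.2.2|) := by
  obtain ⟨ht, h1, h2, h3⟩ := sk_data a b c d x hx
  obtain ⟨n1, n2, n3⟩ := sk_nonpos a b c d x hx
  have habs : |x.1| + |x.2.1| + |x.2.2| = -(x.1 + x.2.1 + x.2.2) := by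
    rw [abs_of_nonpos n1, abs_of_nonpos n2, abs_of_nonpos n3]; ring
  fin_cases i
  · simp only [Fin.zero_eta, Fin.isValue] at hxi ⊢
    have hcell : x.1 + x.2.1 + x.2.2 = 2 * x.1 := by
      simpa [cellX, coord] using hxi.2
    constructor
    · simp only [uco, Matrix.cons_val_zero]
      rw [habs]; linarith
    · intro hy
      set y := trop a b c d 0 x with hydef
      have hySk : y ∈ Sk a b c d := by rcases hy with h | h <;> exact h.1
      obtain ⟨m1, m2, m3⟩ := sk_nonpos a b c d y hySk
      have hy1 : y = trop1 a b c d x := rfl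
      set M := min (min ((2 * x.2.1 : ℝ) : WithTop ℝ) ((2 * x.2.2 : ℝ) : WithTop ℝ))
        (min (min (b + (x.2.1 : WithTop ℝ)) (c + (x.2.2 : WithTop ℝ))) d) with hM
      have htm : tmin a b c d x ≤ M := by
        refine le_min (le_min ?_ ?_) (min_le_right _ _)
        · exact le_trans (min_le_left _ _) (le_trans (min_le_left _ _) (min_le_right _ _))
        · exact le_trans (min_le_left _ _) (le_trans (min_le_right _ _) (min_le_left _ _))
      have hMne : M ≠ ⊤ :=
        ne_top_of_le_ne_top WithTop.coe_ne_top
          (le_trans (min_le_left _ _) (min_le_left _ _))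
      obtain ⟨s, hs⟩ := WithTop.ne_top_iff_exists.mp hMne
      have hrs : x.1 + x.2.1 + x.2.2 ≤ s := by
        rw [ht, ← hs] at htm; exact_mod_cast htm
      have hy1v : y.1 = s - x.1 := by
        rw [hy1]; show M.untopD 0 - x.1 = s - x.1
        rw [← hs, WithTop.untopD_coe]
      have hy2 : y.2.1 = x.2.1 := rfl
      have hy3 : y.2.2 = x.2.2 := rfl
      rw [habs, abs_of_nonpos m1, abs_of_nonpos m2, abs_of_nonpos m3, hy1v, hy2, hy3]
      linarith
  · simp only [Fin.mk_one, Fin.isValue] at hxi ⊢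
    have hcell : x.1 + x.2.1 + x.2.2 = 2 * x.2.1 := by
      simpa [cellX, coord] using hxi.2
    constructor
    · simp only [uco, Matrix.cons_val_one, Matrix.cons_val_zero]
      rw [habs]; linarith
    · intro hy
      set y := trop a b c d 1 x with hydef
      have hySk : y ∈ Sk a b c d := by rcases hy with h | h <;> exact h.1
      obtain ⟨m1, m2, m3⟩ := sk_nonpos a b c d y hySk
      have hy1 : y = trop2 a b c d x := rfl
      set M := min (min ((2 * x.1 : ℝ) : WithTop ℝ) ((2 * x.2.2 : ℝ) : WithTop ℝ))
        (min (min (a + (x.1 : WithTop ℝ)) (c + (x.2.2 : WithTop ℝ))) d) with hM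
      have htm : tmin a b c d x ≤ M := by
        refine le_min (le_min ?_ ?_) (le_min (le_min ?_ ?_) ?_)
        · exact le_trans (min_le_left _ _) (le_trans (min_le_left _ _) (min_le_left _ _))
        · exact le_trans (min_le_left _ _) (le_trans (min_le_right _ _) (min_le_left _ _))
        · exact le_trans (min_le_left _ _) (le_trans (min_le_right _ _) (min_le_right _ _))
        · exact le_trans (min_le_right _ _) (le_trans (min_le_left _ _) (min_le_right _ _))
        · exact le_trans (min_le_right _ _) (min_le_right _ _)
      have hMne : M ≠ ⊤ :=
        ne_top_of_le_ne_top WithTop.coe_ne_top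
          (le_trans (min_le_left _ _) (min_le_left _ _))
      obtain ⟨s, hs⟩ := WithTop.ne_top_iff_exists.mp hMne
      have hrs : x.1 + x.2.1 + x.2.2 ≤ s := by
        rw [ht, ← hs] at htm; exact_mod_cast htm
      have hy2v : y.2.1 = s - x.2.1 := by
        rw [hy1]; show M.untopD 0 - x.2.1 = s - x.2.1
        rw [← hs, WithTop.untopD_coe]
      have hy1' : y.1 = x.1 := rfl
      have hy3 : y.2.2 = x.2.2 := rfl
      rw [habs, abs_of_nonpos m1, abs_of_nonpos m2, abs_of_nonpos m3, hy1', hy2v, hy3]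
      linarith
  · simp only [Fin.reduceFinMk, Fin.isValue] at hxi ⊢
    have hcell : x.1 + x.2.1 + x.2.2 = 2 * x.2.2 := by
      simpa [cellX, coord] using hxi.2
    constructor
    · simp only [uco, Matrix.cons_val_two, Matrix.tail_cons, Matrix.head_cons]
      rw [habs]; linarith
    · intro hy
      set y := trop a b c d 2 x with hydef
      have hySk : y ∈ Sk a b c d := by rcases hy with h | h <;> exact h.1
      obtain ⟨m1, m2, m3⟩ := sk_nonpos a b c d y hySk
      have hy1 : y = trop3 a b c d x := rfl
      set M := min (min ((2 * x.1 : ℝ) : WithTop ℝ) ((2 * x.2.1 : ℝ) : WithTop ℝ))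
        (min (min (a + (x.1 : WithTop ℝ)) (b + (x.2.1 : WithTop ℝ))) d) with hM
      have htm : tmin a b c d x ≤ M := by
        refine le_min (le_min ?_ ?_) (le_min (le_min ?_ ?_) ?_)
        · exact le_trans (min_le_left _ _) (le_trans (min_le_left _ _) (min_le_left _ _))
        · exact le_trans (min_le_left _ _) (le_trans (min_le_left _ _) (min_le_right _ _))
        · exact le_trans (min_le_left _ _) (le_trans (min_le_right _ _) (min_le_right _ _))
        · exact le_trans (min_le_right _ _) (le_trans (min_le_left _ _) (min_le_left _ _))
        · exact le_trans (min_le_right _ _) (min_le_right _ _)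
      have hMne : M ≠ ⊤ :=
        ne_top_of_le_ne_top WithTop.coe_ne_top
          (le_trans (min_le_left _ _) (min_le_left _ _))
      obtain ⟨s, hs⟩ := WithTop.ne_top_iff_exists.mp hMne
      have hrs : x.1 + x.2.1 + x.2.2 ≤ s := by
        rw [ht, ← hs] at htm; exact_mod_cast htm
      have hy3v : y.2.2 = s - x.2.2 := by
        rw [hy1]; show M.untopD 0 - x.2.2 = s - x.2.2
        rw [← hs, WithTop.untopD_coe]
      have hy1' : y.1 = x.1 := rfl
      have hy2 : y.2.1 = x.2.1 := rfl
      rw [habs, abs_of_nonpos m1, abs_of_nonpos m2, abs_of_nonpos m3, hy1', hy2, hy3v]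
      linarith
end
end

section
/- Every point of ℙ¹(ℚ) lies in the orbit of the three-point set {[0:1], [1:1], [1:0]} under the group generated by the projective actions of M₁, M₂ and M₃. -/
/-!
Write a point as `[a : b]` with `a, b` natural numbers: denominators can be cleared, and the
signs of the coordinates can be changed by `M₃` and by rescaling with `-1`. If `0 < a < b`,
then `[a : b] = M₂ [a : 2a - b]` and `|2a - b| < b`; if `0 < b < a`, then
`[a : b] = M₁ [2b - a : b]` and `|2b - a| < a`. So `a + b` descends until `a = 0`, `b = 0`
or `a = b`, i.e. until the point is `[0:1]`, `[1:0]` or `[1:1]`.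
-/

noncomputable section

/-- The projective line over `ℚ`. -/
abbrev PQ : Type := Projectivization ℚ (Fin 2 → ℚ)

/-- The matrices `M₁ = [[−1,2],[0,1]]`, `M₂ = [[1,0],[2,−1]]`, `M₃ = [[−1,0],[0,1]]`
over `ℚ`. -/
def refM : Fin 3 → Matrix (Fin 2) (Fin 2) ℚ :=
  ![!![-1, 2; 0, 1], !![1, 0; 2, -1], !![-1, 0; 0, 1]]

lemma refM_sq (i : Fin 3) : refM i * refM i = 1 := by
  fin_cases i <;>
    simp [refM, Matrix.mul_fin_two, Matrix.one_fin_two]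

lemma refM_toLin'_injective (i : Fin 3) :
    Function.Injective (Matrix.toLin' (refM i)) := by
  intro x y hxy
  have h2 : ∀ v : Fin 2 → ℚ, Matrix.toLin' (refM i) (Matrix.toLin' (refM i) v) = v := by
    intro v
    rw [Matrix.toLin'_apply, Matrix.toLin'_apply, Matrix.mulVec_mulVec, refM_sq,
      Matrix.one_mulVec]
  have := congrArg (Matrix.toLin' (refM i)) hxy
  rwa [h2, h2] at this

/-- The projective action of `Mᵢ` on `ℙ¹(ℚ)`. -/
def gmap (i : Fin 3) : PQ → PQ :=
  Projectivization.map (Matrix.toLin' (refM i)) (refM_toLin'_injective i)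

/-- The point `[0:1] ∈ ℙ¹(ℚ)`. -/
def pt0 : PQ := Projectivization.mk ℚ ![0, 1] (by
  intro h; simpa using congrFun h 1)

/-- The point `[1:1] ∈ ℙ¹(ℚ)`. -/
def pt1 : PQ := Projectivization.mk ℚ ![1, 1] (by
  intro h; simpa using congrFun h 0)

/-- The point `[1:0] ∈ ℙ¹(ℚ)`. -/
def ptInf : PQ := Projectivization.mk ℚ ![1, 0] (by
  intro h; simpa using congrFun h 0)

open Matrix

lemma refM_zero_mulVec (x y : ℚ) : refM 0 *ᵥ ![x, y] = ![2 * y - x, y] := by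
  ext i; fin_cases i <;> simp [refM, mul_comm, sub_eq_neg_add]

lemma refM_one_mulVec (x y : ℚ) : refM 1 *ᵥ ![x, y] = ![x, 2 * x - y] := by
  ext i; fin_cases i <;> simp [refM, mul_comm, sub_eq_add_neg]

lemma refM_two_mulVec (x y : ℚ) : refM 2 *ᵥ ![x, y] = ![-x, y] := by
  ext i; fin_cases i <;> simp [refM]

lemma refM_mulVec_mulVec (i : Fin 3) (v : Fin 2 → ℚ) : refM i *ᵥ (refM i *ᵥ v) = v := by
  rw [mulVec_mulVec, refM_sq, one_mulVec]

lemma gmap_mk (i : Fin 3) (v : Fin 2 → ℚ) (hv : v ≠ 0) :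
    gmap i (Projectivization.mk ℚ v hv) =
      Projectivization.mk ℚ (refM i *ᵥ v) (fun h => hv <| by
        rw [← refM_mulVec_mulVec i v, h, mulVec_zero]) :=
  Projectivization.map_mk _ _ v hv

lemma gmap_involutive (i : Fin 3) : Function.Involutive (gmap i) := by
  intro P
  induction P using Projectivization.ind with
  | h v hv => simp only [gmap_mk, refM_mulVec_mulVec]

def wordOrbit : Set PQ :=
  {P | ∃ (l : List (Fin 3)) (P₀ : PQ), (P₀ = pt0 ∨ P₀ = pt1 ∨ P₀ = ptInf) ∧
    P = l.foldr (fun i Q => gmap i Q) P₀}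

lemma gmap_mem_wordOrbit (i : Fin 3) {P : PQ} (hP : P ∈ wordOrbit) :
    gmap i P ∈ wordOrbit := by
  obtain ⟨l, P₀, hP₀, rfl⟩ := hP
  exact ⟨i :: l, P₀, hP₀, rfl⟩

lemma mem_wordOrbit_of_gmap_mem (i : Fin 3) {P : PQ} (hP : gmap i P ∈ wordOrbit) :
    P ∈ wordOrbit :=
  gmap_involutive i P ▸ gmap_mem_wordOrbit i hP

/-- The zero vector belongs vacuously, which makes the set closed under all scalar multiples. -/
def vecOrbit : Set (Fin 2 → ℚ) :=
  {v | ∀ hv : v ≠ 0, Projectivization.mk ℚ v hv ∈ wordOrbit}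

lemma smul_mem_vecOrbit (c : ℚ) {v : Fin 2 → ℚ} (hv : v ∈ vecOrbit) : c • v ∈ vecOrbit := by
  intro hcv
  obtain ⟨hc, hv0⟩ := smul_ne_zero_iff.mp hcv
  rw [(Projectivization.mk_eq_mk_iff' ℚ _ v hcv hv0).mpr ⟨c, rfl⟩]
  exact hv hv0

lemma mem_vecOrbit_of_mulVec_mem (i : Fin 3) {v : Fin 2 → ℚ}
    (hv : refM i *ᵥ v ∈ vecOrbit) : v ∈ vecOrbit := fun hv0 =>
  mem_wordOrbit_of_gmap_mem i (gmap_mk i v hv0 ▸ hv _)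

lemma mem_vecOrbit_of_abs_mem {x y : ℚ} (h : ![|x|, |y|] ∈ vecOrbit) :
    ![x, y] ∈ vecOrbit := by
  have neg_fst : ∀ x y : ℚ, ![-x, y] ∈ vecOrbit → ![x, y] ∈ vecOrbit := fun x y h =>
    mem_vecOrbit_of_mulVec_mem 2 (by rwa [refM_two_mulVec])
  have neg_snd : ∀ x y : ℚ, ![x, -y] ∈ vecOrbit → ![x, y] ∈ vecOrbit := fun x y h => by
    simpa using smul_mem_vecOrbit (-1) (neg_fst (-x) (-y) (by simpa using h))
  rcases abs_choice x with hx | hx <;> rcases abs_choice y with hy | hy <;>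
    rw [hx, hy] at h
  · exact h
  · exact neg_snd x y h
  · exact neg_fst x y h
  · exact neg_fst x y (neg_snd (-x) y h)

lemma natVec_mem_vecOrbit (a b : ℕ) : ![(a : ℚ), b] ∈ vecOrbit := by
  induction h : a + b using Nat.strong_induction_on generalizing a b with
  | _ n ih =>
  subst h
  rcases Nat.lt_trichotomy a b with hab | rfl | hab
  · rcases Nat.eq_zero_or_pos a with rfl | ha
    · simpa using smul_mem_vecOrbit b fun _ => ⟨[], pt0, Or.inl rfl, rfl⟩
    apply mem_vecOrbit_of_mulVec_mem 1
    rw [refM_one_mulVec]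
    apply mem_vecOrbit_of_abs_mem
    simpa [Nat.cast_natAbs] using ih _ (by omega) a (2 * a - b : ℤ).natAbs rfl
  · simpa using smul_mem_vecOrbit a fun _ => ⟨[], pt1, Or.inr (Or.inl rfl), rfl⟩
  · rcases Nat.eq_zero_or_pos b with rfl | hb
    · simpa using smul_mem_vecOrbit a fun _ => ⟨[], ptInf, Or.inr (Or.inr rfl), rfl⟩
    apply mem_vecOrbit_of_mulVec_mem 0
    rw [refM_zero_mulVec]
    apply mem_vecOrbit_of_abs_mem
    simpa [Nat.cast_natAbs] using ih _ (by omega) (2 * b - a : ℤ).natAbs b rfl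

lemma exists_eq_smul_intVec (v : Fin 2 → ℚ) :
    ∃ (c : ℚ) (m k : ℤ), v = c • ![(m : ℚ), k] := by
  refine ⟨((v 0).den * (v 1).den : ℚ)⁻¹, (v 0).num * (v 1).den, (v 1).num * (v 0).den, ?_⟩
  ext i; fin_cases i <;> simp [← Rat.mul_den_eq_num] <;> field_simp

/-- Every point of `ℙ¹(ℚ)` lies in the orbit of `{[0:1], [1:1], [1:0]}` under the group
generated by the projective actions of `M₁, M₂, M₃` (each of which is an involution, so
group elements are exactly finite words in the three generators). -/
theorem statement18 (P : PQ) :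
    ∃ (l : List (Fin 3)) (P₀ : PQ),
      (P₀ = pt0 ∨ P₀ = pt1 ∨ P₀ = ptInf) ∧
      P = l.foldr (fun i Q => gmap i Q) P₀ := by
  induction P using Projectivization.ind with
  | h v hv =>
  obtain ⟨c, m, k, rfl⟩ := exists_eq_smul_intVec v
  have hint : ![(m : ℚ), k] ∈ vecOrbit := mem_vecOrbit_of_abs_mem <| by
    simpa [Nat.cast_natAbs] using natVec_mem_vecOrbit m.natAbs k.natAbs
  exact smul_mem_vecOrbit c hint hv
end
end
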